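/- arXiv:math/0406526 — 9 statements merged into one kernel-verified Lean document; each statement's English description precedes it below -/
import Mathlib

section
/- Let (a_n) be a sequence of real numbers such that n^2 * a_n converges to -c for some finite real c. Then n * ((1 + a_n)^n - 1) converges to -c as n → ∞. -/
open Filter Topology

theorem stmt0 (a : ℕ → ℝ) (c : ℝ)
    (h : Tendsto (fun n : ℕ => (n : ℝ) ^ 2 * a n) atTop (𝓝 (-c))) :
    Tendsto (fun n : ℕ => (n : ℝ) * ((1 + a n) ^ n - 1)) atTop (𝓝 (-c)) := by
  -- n * a n → 0
  have hm : Tendsto (fun n : ℕ => (n : ℝ) * a n) atTop (𝓝 0) := by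
    have h1 : Tendsto (fun n : ℕ => ((n : ℝ) ^ 2 * a n) * (1 / n)) atTop (𝓝 ((-c) * 0)) :=
      h.mul tendsto_one_div_atTop_nhds_zero_nat
    rw [mul_zero] at h1
    refine h1.congr' ?_
    filter_upwards [eventually_ge_atTop 1] with n hn
    have hn0 : (n : ℝ) ≠ 0 := by exact_mod_cast Nat.one_le_iff_ne_zero.mp hn
    field_simp
  -- eventually |n * a n| < 1/2 and n ≥ 1
  have hsmall : ∀ᶠ n : ℕ in atTop, |(n : ℝ) * a n| < 1 / 2 := by
    have := hm.abs
    rw [abs_zero] at this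
    exact this.eventually_lt_const (by norm_num)
  -- upper bound function tends to -c
  have hg : Tendsto (fun n : ℕ => (n : ℝ) ^ 2 * a n / (1 - (n : ℝ) * a n)) atTop (𝓝 (-c)) := by
    have : Tendsto (fun n : ℕ => (n : ℝ) ^ 2 * a n / (1 - (n : ℝ) * a n)) atTop
        (𝓝 ((-c) / (1 - 0))) := h.div (tendsto_const_nhds.sub hm) (by norm_num)
    simpa using this
  refine tendsto_of_tendsto_of_tendsto_of_le_of_le' h hg ?_ ?_
  · -- n^2 * a n ≤ n * ((1 + a n)^n - 1)  (Bernoulli)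
    filter_upwards [hsmall, eventually_ge_atTop 1] with n hs hn
    have hn0 : (1 : ℝ) ≤ n := by exact_mod_cast hn
    have ha : |a n| < 1 / 2 := by
      calc |a n| ≤ |(n : ℝ)| * |a n| := le_mul_of_one_le_left (abs_nonneg _)
            (by rwa [abs_of_nonneg (by linarith)])
        _ = |(n : ℝ) * a n| := (abs_mul _ _).symm
        _ < 1 / 2 := hs
    have hB : 1 + (n : ℝ) * a n ≤ (1 + a n) ^ n :=
      one_add_mul_le_pow (by cases abs_lt.mp ha; linarith) n
    nlinarith [hB]
  · -- n * ((1 + a n)^n - 1) ≤ n^2 * a n / (1 - n * a n)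
    filter_upwards [hsmall, eventually_ge_atTop 1] with n hs hn
    have hn0 : (1 : ℝ) ≤ n := by exact_mod_cast hn
    have hna := abs_lt.mp hs
    have ha : |a n| < 1 / 2 := by
      calc |a n| ≤ |(n : ℝ)| * |a n| := le_mul_of_one_le_left (abs_nonneg _)
            (by rwa [abs_of_nonneg (by linarith)])
        _ = |(n : ℝ) * a n| := (abs_mul _ _).symm
        _ < 1 / 2 := hs
    obtain ⟨ha1, ha2⟩ := abs_lt.mp ha
    have hpos : (0 : ℝ) < 1 - (n : ℝ) * a n := by linarith [hna.2]
    -- (1 - a)^n ≥ 1 - n a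
    have hB2 : 1 + (n : ℝ) * (-a n) ≤ (1 + (-a n)) ^ n :=
      one_add_mul_le_pow (by linarith) n
    -- (1 + a)^n (1 - a)^n = (1 - a^2)^n ≤ 1
    have hprod : (1 + a n) ^ n * (1 + (-a n)) ^ n ≤ 1 := by
      rw [← mul_pow]
      have h1 : (1 + a n) * (1 + (-a n)) = 1 - a n ^ 2 := by ring
      rw [h1]
      apply pow_le_one₀ <;> nlinarith
    have hposp : (0 : ℝ) ≤ (1 + a n) ^ n := pow_nonneg (by linarith) n
    -- so (1+a)^n * (1 - n a) ≤ 1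
    have hkey : (1 + a n) ^ n * (1 - (n : ℝ) * a n) ≤ 1 := by
      calc (1 + a n) ^ n * (1 - (n : ℝ) * a n) ≤ (1 + a n) ^ n * (1 + (-a n)) ^ n := by
            apply mul_le_mul_of_nonneg_left (by linarith [hB2]) hposp
        _ ≤ 1 := hprod
    have hle : (1 + a n) ^ n ≤ 1 / (1 - (n : ℝ) * a n) := by
      rw [le_div_iff₀ hpos]; exact hkey
    have : (n : ℝ) * ((1 + a n) ^ n - 1) ≤ (n : ℝ) * (1 / (1 - (n : ℝ) * a n) - 1) := by
      apply mul_le_mul_of_nonneg_left (by linarith) (by linarith)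
    calc (n : ℝ) * ((1 + a n) ^ n - 1) ≤ (n : ℝ) * (1 / (1 - (n : ℝ) * a n) - 1) := this
      _ = (n : ℝ) ^ 2 * a n / (1 - (n : ℝ) * a n) := by field_simp; ring
end

section
/- For every C > 0, the supremum over x ∈ [l^{-C}, 1] of | l * ( x - (1 + (log x)/l)^{l-1} ) - x * log x - (x * log^2 x)/2 | tends to 0 as l → ∞. -/
open Filter Topology Real

private lemma exp_mul_pow_le {y : ℝ} (hy : y ≤ 0) (k : ℕ) :
    Real.exp y * (-y) ^ k ≤ (k.factorial : ℝ) := by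
  have h := Real.pow_div_factorial_le_exp (x := -y) (neg_nonneg.2 hy) k
  have hk : (0:ℝ) < (k.factorial : ℝ) := by positivity
  rw [div_le_iff₀ hk] at h
  have h2 := mul_le_mul_of_nonneg_right h (Real.exp_pos y).le
  calc Real.exp y * (-y) ^ k = (-y) ^ k * Real.exp y := mul_comm _ _
    _ ≤ Real.exp (-y) * (k.factorial : ℝ) * Real.exp y := h2
    _ = (k.factorial : ℝ) * (Real.exp (-y) * Real.exp y) := by ring
    _ = (k.factorial : ℝ) := by rw [← Real.exp_add]; simp

set_option maxHeartbeats 1000000 in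
private lemma key (l : ℕ) (hl : 1 ≤ l) (y : ℝ) (hy0 : y ≤ 0) (h1 : -y ≤ (l:ℝ)/2)
    (h2 : 2*y^2 + -y ≤ (l:ℝ)) :
    |(l:ℝ) * (Real.exp y - (1 + y/(l:ℝ)) ^ (l - 1)) - Real.exp y * y -
      Real.exp y * y^2/2| ≤ 200/(l:ℝ) := by
  have hlr : (1:ℝ) ≤ (l:ℝ) := by exact_mod_cast hl
  have hlp : (0:ℝ) < (l:ℝ) := lt_of_lt_of_le one_pos hlr
  set t : ℝ := y / (l:ℝ) with ht_def
  have ht0 : t ≤ 0 := div_nonpos_of_nonpos_of_nonneg hy0 hlp.le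
  have htabs : |t| ≤ 1/2 := by
    rw [abs_of_nonpos ht0, ht_def, ← neg_div, div_le_iff₀ hlp]
    calc -y ≤ (l:ℝ)/2 := h1
      _ = 1/2 * (l:ℝ) := by ring
  have h1t : (0:ℝ) < 1 + t := by
    have := neg_abs_le t; linarith
  set L : ℝ := Real.log (1 + t) with hL_def
  set r : ℝ := L - t + t^2/2 with hr_def
  have hr : |r| ≤ 2 * |t|^3 := by
    have habs : |(-t)| < 1 := by rw [abs_neg]; linarith [abs_nonneg t]
    have h := Real.abs_log_sub_add_sum_range_le habs 2
    have hsum : (∑ i ∈ Finset.range 2, (-t) ^ (i + 1) / (i + 1)) = -t + t^2/2 := by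
      rw [Finset.sum_range_succ, Finset.sum_range_one]
      norm_num
    rw [hsum] at h
    have h1mt : Real.log (1 - -t) = L := by rw [hL_def]; ring_nf
    rw [h1mt] at h
    have heq : -t + t ^ 2 / 2 + L = r := by rw [hr_def]; ring
    rw [heq] at h
    calc |r| ≤ |(-t)| ^ (2+1) / (1 - |(-t)|) := h
      _ = |t|^3 / (1 - |t|) := by rw [abs_neg]
      _ ≤ |t|^3 / (1/2) := by
          apply div_le_div_of_nonneg_left (by positivity) (by norm_num) (by linarith)
      _ = 2 * |t|^3 := by ring
  have hLt : |L - t| ≤ 2 * t^2 := by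
    have h3 : 2 * |t|^3 ≤ t^2 := by
      have he : |t|^3 = |t| * |t|^2 := by ring
      rw [he, sq_abs] at *
      nlinarith [abs_nonneg t, sq_nonneg t]
    have habs2 : |t^2/2| = t^2/2 := abs_of_nonneg (by positivity)
    calc |L - t| = |r - t^2/2| := by rw [hr_def]; ring_nf
      _ ≤ |r| + |t^2/2| := abs_sub _ _
      _ ≤ 2*|t|^3 + t^2/2 := by rw [habs2]; linarith
      _ ≤ t^2 + t^2/2 := by linarith
      _ ≤ 2 * t^2 := by nlinarith [sq_nonneg t]
  set D : ℝ := ((l:ℝ) - 1) * L - y with hD_def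
  have hyt : y = (l:ℝ) * t := by rw [ht_def]; field_simp
  have hDeq : D = ((l:ℝ) - 1) * (L - t) - t := by
    rw [hD_def, hyt]; ring
  have hDabs : |D| ≤ (2*y^2 + -y) / (l:ℝ) := by
    have hstep : ((l:ℝ) - 1) * |L - t| ≤ ((l:ℝ) - 1) * (2 * t^2) :=
      mul_le_mul_of_nonneg_left hLt (by linarith)
    have htsq : (l:ℝ) * (2 * t^2) + |t| = (2*y^2 + -y) / (l:ℝ) := by
      rw [abs_of_nonpos ht0, ht_def]
      field_simp
    calc |D| = |((l:ℝ) - 1) * (L - t) - t| := by rw [hDeq]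
      _ ≤ |((l:ℝ) - 1) * (L - t)| + |t| := abs_sub _ _
      _ = ((l:ℝ) - 1) * |L - t| + |t| := by
          rw [abs_mul, abs_of_nonneg (by linarith : (0:ℝ) ≤ (l:ℝ) - 1)]
      _ ≤ (l:ℝ) * (2 * t^2) + |t| := by nlinarith [sq_nonneg t]
      _ = (2*y^2 + -y) / (l:ℝ) := htsq
  have hD1 : |D| ≤ 1 := by
    refine hDabs.trans ?_
    rw [div_le_one hlp]; exact h2
  have hexpD : |Real.exp D - 1 - D| ≤ D^2 := Real.abs_exp_sub_one_sub_id_le hD1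
  have hident : (l:ℝ)*D + y + y^2/2 = y^2/(2*(l:ℝ)) + (l:ℝ)*((l:ℝ)-1)*r := by
    rw [hD_def, hr_def, ht_def]
    field_simp
    ring
  have hml : ((l - 1 : ℕ) : ℝ) = (l:ℝ) - 1 := by
    rw [Nat.cast_sub hl]; simp
  have hpow : (1 + y/(l:ℝ)) ^ (l - 1) = Real.exp (y + D) := by
    calc (1 + y/(l:ℝ)) ^ (l - 1) = (Real.exp L) ^ (l - 1) := by
          rw [hL_def, Real.exp_log h1t]
      _ = Real.exp (((l-1:ℕ):ℝ) * L) := (Real.exp_nat_mul L (l-1)).symm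
      _ = Real.exp (y + D) := by rw [hml, hD_def]; ring_nf
  rw [hpow, Real.exp_add]
  have hmain : (l:ℝ) * (Real.exp y - Real.exp y * Real.exp D) - Real.exp y * y -
      Real.exp y * y^2/2
      = Real.exp y * (-((l:ℝ)*(Real.exp D - 1 - D)) - ((l:ℝ)*D + y + y^2/2)) := by
    ring
  rw [hmain, abs_mul, abs_of_nonneg (Real.exp_pos y).le]
  have hb1 : |(l:ℝ)*(Real.exp D - 1 - D)| ≤ (4*y^4 + 4*(-y)^3 + y^2)/(l:ℝ) := by
    have hsq : (l:ℝ) * |D|^2 ≤ (l:ℝ) * ((2*y^2 + -y)/(l:ℝ))^2 := by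
      apply mul_le_mul_of_nonneg_left _ hlp.le
      exact pow_le_pow_left₀ (abs_nonneg _) hDabs 2
    have heq2 : (l:ℝ) * ((2*y^2 + -y)/(l:ℝ))^2 = (4*y^4 + 4*(-y)^3 + y^2)/(l:ℝ) := by
      field_simp
      ring
    calc |(l:ℝ)*(Real.exp D - 1 - D)| = (l:ℝ) * |Real.exp D - 1 - D| := by
          rw [abs_mul, abs_of_nonneg hlp.le]
      _ ≤ (l:ℝ) * D^2 := mul_le_mul_of_nonneg_left hexpD hlp.le
      _ = (l:ℝ) * |D|^2 := by rw [sq_abs]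
      _ ≤ (l:ℝ) * ((2*y^2 + -y)/(l:ℝ))^2 := hsq
      _ = (4*y^4 + 4*(-y)^3 + y^2)/(l:ℝ) := heq2
  have hb2 : |(l:ℝ)*D + y + y^2/2| ≤ (y^2/2 + 2*(-y)^3)/(l:ℝ) := by
    have hll : (0:ℝ) ≤ (l:ℝ)*((l:ℝ)-1) := by nlinarith
    have habs3 : |(l:ℝ)*((l:ℝ)-1)*r| = (l:ℝ)*((l:ℝ)-1) * |r| := by
      rw [abs_mul, abs_of_nonneg hll]
    have hstep : (l:ℝ)*((l:ℝ)-1) * |r| ≤ (l:ℝ)*(l:ℝ) * (2*|t|^3) := by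
      have e1 : (l:ℝ)*((l:ℝ)-1) * |r| ≤ (l:ℝ)*((l:ℝ)-1) * (2*|t|^3) :=
        mul_le_mul_of_nonneg_left hr hll
      nlinarith [pow_nonneg (abs_nonneg t) 3]
    have hval : y^2/(2*(l:ℝ)) + (l:ℝ)*(l:ℝ)*(2*|t|^3) = (y^2/2 + 2*(-y)^3)/(l:ℝ) := by
      rw [abs_of_nonpos ht0, ht_def]
      field_simp
    calc |(l:ℝ)*D + y + y^2/2| = |y^2/(2*(l:ℝ)) + (l:ℝ)*((l:ℝ)-1)*r| := by rw [hident]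
      _ ≤ |y^2/(2*(l:ℝ))| + |(l:ℝ)*((l:ℝ)-1)*r| := abs_add_le _ _
      _ = y^2/(2*(l:ℝ)) + (l:ℝ)*((l:ℝ)-1)*|r| := by
          rw [abs_of_nonneg (by positivity), habs3]
      _ ≤ y^2/(2*(l:ℝ)) + (l:ℝ)*(l:ℝ)*(2*|t|^3) := by linarith
      _ = (y^2/2 + 2*(-y)^3)/(l:ℝ) := hval
  have hG : |-((l:ℝ)*(Real.exp D - 1 - D)) - ((l:ℝ)*D + y + y^2/2)|
      ≤ (4*y^4 + 6*(-y)^3 + (3/2)*y^2) / (l:ℝ) := by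
    calc |-((l:ℝ)*(Real.exp D - 1 - D)) - ((l:ℝ)*D + y + y^2/2)|
        ≤ |-((l:ℝ)*(Real.exp D - 1 - D))| + |(l:ℝ)*D + y + y^2/2| := abs_sub _ _
      _ = |(l:ℝ)*(Real.exp D - 1 - D)| + |(l:ℝ)*D + y + y^2/2| := by rw [abs_neg]
      _ ≤ (4*y^4 + 4*(-y)^3 + y^2)/(l:ℝ) + (y^2/2 + 2*(-y)^3)/(l:ℝ) := by
          linarith
      _ = (4*y^4 + 6*(-y)^3 + (3/2)*y^2) / (l:ℝ) := by ring
  have hf4 : Real.exp y * (-y)^4 ≤ 24 := by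
    have := exp_mul_pow_le hy0 4
    norm_num [Nat.factorial] at this
    linarith
  have hf3 : Real.exp y * (-y)^3 ≤ 6 := by
    have := exp_mul_pow_le hy0 3
    norm_num [Nat.factorial] at this
    linarith
  have hf2 : Real.exp y * (-y)^2 ≤ 2 := by
    have := exp_mul_pow_le hy0 2
    norm_num [Nat.factorial] at this
    linarith
  calc Real.exp y * |-((l:ℝ)*(Real.exp D - 1 - D)) - ((l:ℝ)*D + y + y^2/2)|
      ≤ Real.exp y * ((4*y^4 + 6*(-y)^3 + (3/2)*y^2) / (l:ℝ)) :=
        mul_le_mul_of_nonneg_left hG (Real.exp_pos y).le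
    _ = (4*(Real.exp y * (-y)^4) + 6*(Real.exp y * (-y)^3) +
          (3/2)*(Real.exp y * (-y)^2)) / (l:ℝ) := by ring
    _ ≤ (4*24 + 6*6 + (3/2)*2) / (l:ℝ) := by
        apply (div_le_div_iff_of_pos_right hlp).mpr
        linarith
    _ ≤ 200/(l:ℝ) := by
        apply (div_le_div_iff_of_pos_right hlp).mpr
        norm_num

theorem stmt1 (C : ℝ) (hC : 0 < C) :
    Tendsto
      (fun l : ℕ =>
        sSup ((fun x : ℝ =>
          |(l : ℝ) * (x - (1 + Real.log x / l) ^ (l - 1)) - x * Real.log x -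
            x * (Real.log x) ^ 2 / 2|) '' Set.Icc ((l : ℝ) ^ (-C)) 1))
      atTop (𝓝 0) := by
  have T0 : Tendsto (fun x : ℝ => (2*(C*Real.log x)^2 + C*Real.log x)/x) atTop (𝓝 0) := by
    have t2 := Real.tendsto_pow_log_div_mul_add_atTop 1 0 2 one_ne_zero
    have t1 := Real.tendsto_pow_log_div_mul_add_atTop 1 0 1 one_ne_zero
    have h := ((t2.const_mul (2*C^2)).add (t1.const_mul C))
    simp only [mul_zero, add_zero] at h
    refine h.congr' ?_
    filter_upwards [eventually_ne_atTop (0:ℝ)] with x hx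
    field_simp
  have T1 : Tendsto (fun x : ℝ => C * Real.log x / x) atTop (𝓝 0) := by
    have t1 := Real.tendsto_pow_log_div_mul_add_atTop 1 0 1 one_ne_zero
    have h := t1.const_mul C
    simp only [mul_zero] at h
    refine h.congr' ?_
    filter_upwards [eventually_ne_atTop (0:ℝ)] with x hx
    field_simp
    rw [add_zero, mul_div_cancel_right₀ _ hx]
  have hcast : Tendsto (fun l : ℕ => (l:ℝ)) atTop atTop := tendsto_natCast_atTop_atTop
  have E0 : ∀ᶠ l : ℕ in atTop, (2*(C*Real.log l)^2 + C*Real.log l)/(l:ℝ) ≤ 1 :=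
    (T0.comp hcast).eventually (eventually_le_nhds one_pos)
  have E1 : ∀ᶠ l : ℕ in atTop, C * Real.log l / (l:ℝ) ≤ 1/2 :=
    (T1.comp hcast).eventually (eventually_le_nhds one_half_pos)
  have E2 : ∀ᶠ l : ℕ in atTop, 1 ≤ l := eventually_ge_atTop 1
  have Hbd : ∀ l : ℕ, (2*(C*Real.log l)^2 + C*Real.log l)/(l:ℝ) ≤ 1 →
      C * Real.log l / (l:ℝ) ≤ 1/2 → 1 ≤ l →
      ∀ z ∈ (fun x : ℝ =>
        |(l : ℝ) * (x - (1 + Real.log x / l) ^ (l - 1)) - x * Real.log x -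
          x * (Real.log x) ^ 2 / 2|) '' Set.Icc ((l : ℝ) ^ (-C)) 1, z ≤ 200/(l:ℝ) := by
    intro l h0 h1 h2
    have hlr : (1:ℝ) ≤ (l:ℝ) := by exact_mod_cast h2
    have hlp : (0:ℝ) < (l:ℝ) := lt_of_lt_of_le one_pos hlr
    have hlog : (0:ℝ) ≤ Real.log l := Real.log_nonneg hlr
    rintro z ⟨x, hx, rfl⟩
    have hx0 : 0 < x := lt_of_lt_of_le (Real.rpow_pos_of_pos hlp _) hx.1
    have hy0 : Real.log x ≤ 0 := Real.log_nonpos hx0.le hx.2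
    have hylb : -(C * Real.log l) ≤ Real.log x := by
      have h := Real.log_le_log (Real.rpow_pos_of_pos hlp (-C)) hx.1
      rwa [Real.log_rpow hlp, neg_mul] at h
    have hyC : -Real.log x ≤ C * Real.log l := by linarith
    have hc1 : -Real.log x ≤ (l:ℝ)/2 := by
      rw [div_le_iff₀ hlp] at h1
      linarith
    have hc2 : 2*(Real.log x)^2 + -Real.log x ≤ (l:ℝ) := by
      rw [div_le_one hlp] at h0
      have hsq : (Real.log x)^2 ≤ (C * Real.log l)^2 := by
        have habs : |Real.log x| ≤ C * Real.log l := by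
          rw [abs_of_nonpos hy0]; exact hyC
        calc (Real.log x)^2 = |Real.log x|^2 := (sq_abs _).symm
          _ ≤ (C * Real.log l)^2 := pow_le_pow_left₀ (abs_nonneg _) habs 2
      linarith
    have hk := key l h2 (Real.log x) hy0 hc1 hc2
    rwa [Real.exp_log hx0] at hk
  apply tendsto_of_tendsto_of_tendsto_of_le_of_le' (tendsto_const_nhds)
    (tendsto_const_div_atTop_nhds_zero_nat 200)
  · filter_upwards [E0, E1, E2] with l h0 h1 h2
    have hlr : (1:ℝ) ≤ (l:ℝ) := by exact_mod_cast h2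
    refine le_csSup ⟨200/(l:ℝ), Hbd l h0 h1 h2⟩ ?_
    refine ⟨1, ⟨Real.rpow_le_one_of_one_le_of_nonpos hlr (neg_nonpos.2 hC.le), le_refl 1⟩, ?_⟩
    simp [Real.log_one]
  · filter_upwards [E0, E1, E2] with l h0 h1 h2
    have hlr : (1:ℝ) ≤ (l:ℝ) := by exact_mod_cast h2
    have hlp : (0:ℝ) < (l:ℝ) := lt_of_lt_of_le one_pos hlr
    exact Real.sSup_le (Hbd l h0 h1 h2) (by positivity)
end

section
/- For every integer l ≥ 2 and every x ∈ [l^{-3/2}, 1], one has (1/x) * (1 + (log x)/l)^{l-2} ≤ e^2 * (1 + (log e^{-2})/l)^{l-2} ≤ e^2. -/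
theorem stmt2 (l : ℕ) (hl : 2 ≤ l) (x : ℝ)
    (hx : x ∈ Set.Icc ((l : ℝ) ^ (-(3 / 2 : ℝ))) 1) :
    (1 / x) * (1 + Real.log x / l) ^ (l - 2) ≤
        Real.exp 2 * (1 + Real.log (Real.exp (-2)) / l) ^ (l - 2) ∧
      Real.exp 2 * (1 + Real.log (Real.exp (-2)) / l) ^ (l - 2) ≤ Real.exp 2 := by
  obtain ⟨hx1, hx2⟩ := hx
  have hL2 : (2 : ℝ) ≤ (l : ℝ) := by exact_mod_cast hl
  have hL0 : (0 : ℝ) < (l : ℝ) := by linarith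
  have hxpos : 0 < x := lt_of_lt_of_le (Real.rpow_pos_of_pos hL0 _) hx1
  set L : ℝ := (l : ℝ) with hLdef
  set t := Real.log x with ht
  have hlog_lb : -(3 / 2) * Real.log L ≤ t := by
    have h := Real.log_le_log (Real.rpow_pos_of_pos hL0 _) hx1
    rwa [Real.log_rpow hL0] at h
  have hlogL0 : 0 ≤ Real.log L := Real.log_nonneg (by linarith)
  have hsq : Real.log L ≤ 2 * (Real.sqrt L - 1) := by
    have h1 : Real.log (Real.sqrt L) = Real.log L / 2 := Real.log_sqrt hL0.le
    have h2 : Real.log (Real.sqrt L) ≤ Real.sqrt L - 1 :=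
      Real.log_le_sub_one_of_pos (Real.sqrt_pos.2 hL0)
    linarith
  have hLt : 0 ≤ L + t := by
    nlinarith [Real.sq_sqrt hL0.le, Real.sqrt_nonneg L, sq_nonneg (Real.sqrt L - 3 / 2)]
  have hlexp : Real.log (Real.exp (-2)) = -2 := Real.log_exp _
  have h2L : 0 ≤ 1 - 2 / L := by
    have h : 2 / L ≤ 1 := (div_le_one hL0).2 hL2
    linarith
  have hgoal2 : 1 + Real.log (Real.exp (-2)) / L = 1 - 2 / L := by
    rw [hlexp]; ring
  have hxinv : 1 / x = Real.exp (-t) := by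
    rw [ht, Real.exp_neg, Real.exp_log hxpos, one_div]
  clear_value L t
  constructor
  · -- first inequality
    rcases eq_or_lt_of_le hl with h2 | h3
    · -- l = 2
      have hl2 : l = 2 := h2.symm
      subst hl2
      simp only [Nat.sub_self, pow_zero, mul_one]
      rw [hxinv]
      have hlog2 : Real.log L ≤ 1 := by
        have h9 : Real.log 2 < 0.6931471808 := Real.log_two_lt_d9
        have hLeq : Real.log L = Real.log 2 := by norm_num [hLdef]
        linarith
      have hmt : -t ≤ 2 := by linarith
      exact Real.exp_le_exp.2 hmt
    · -- l ≥ 3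
      have hL3 : (3 : ℝ) ≤ L := by rw [hLdef]; exact_mod_cast h3
      have hL2' : (0 : ℝ) < L - 2 := by linarith
      have hmcast : ((l - 2 : ℕ) : ℝ) = L - 2 := by
        rw [hLdef]; push_cast [Nat.cast_sub hl]; ring
      set m := l - 2 with hm
      have hfact : 1 + t / L = (1 - 2 / L) * ((L + t) / (L - 2)) := by
        field_simp
      have hb0 : 0 ≤ (L + t) / (L - 2) := div_nonneg hLt hL2'.le
      have hstep : ((L + t) / (L - 2)) ^ m ≤ Real.exp (t + 2) := by
        have h1 : (L + t) / (L - 2) ≤ Real.exp ((t + 2) / (L - 2)) := by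
          have he := Real.add_one_le_exp ((t + 2) / (L - 2))
          have heq : (t + 2) / (L - 2) + 1 = (L + t) / (L - 2) := by
            field_simp
            ring
          linarith [heq ▸ he]
        calc ((L + t) / (L - 2)) ^ m ≤ (Real.exp ((t + 2) / (L - 2))) ^ m :=
              pow_le_pow_left₀ hb0 h1 m
          _ = Real.exp ((t + 2) / (L - 2) * m) := by
              rw [← Real.exp_nat_mul]; ring_nf
          _ = Real.exp (t + 2) := by
              rw [hmcast]
              congr 1
              field_simp
      rw [hxinv, hgoal2, hfact, mul_pow]
      have hchain : Real.exp (-t) * ((1 - 2 / L) ^ m * ((L + t) / (L - 2)) ^ m) ≤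
          Real.exp (-t) * ((1 - 2 / L) ^ m * Real.exp (t + 2)) := by
        apply mul_le_mul_of_nonneg_left _ (Real.exp_nonneg _)
        exact mul_le_mul_of_nonneg_left hstep (pow_nonneg h2L m)
      calc Real.exp (-t) * ((1 - 2 / L) ^ m * ((L + t) / (L - 2)) ^ m)
          ≤ Real.exp (-t) * ((1 - 2 / L) ^ m * Real.exp (t + 2)) := hchain
        _ = Real.exp 2 * (1 - 2 / L) ^ m := by
            rw [mul_comm ((1 - 2 / L) ^ m) (Real.exp (t + 2)), ← mul_assoc,
              ← Real.exp_add]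
            norm_num
  · -- second inequality
    rw [hgoal2]
    have hle1 : 1 - 2 / L ≤ 1 := by
      have : 0 ≤ 2 / L := by positivity
      linarith
    have hpow : (1 - 2 / L) ^ (l - 2) ≤ 1 := pow_le_one₀ h2L hle1
    calc Real.exp 2 * (1 - 2 / L) ^ (l - 2) ≤ Real.exp 2 * 1 :=
          mul_le_mul_of_nonneg_left hpow (Real.exp_nonneg _)
      _ = Real.exp 2 := mul_one _
end

section
/- If ξ has the first-coordinate marginal of the uniform distribution on the unit simplex in R^l (i.e., P(ξ ≤ α) = 1 - (1-α)^{l-1} for α ∈ [0,1]), then the random variable y = 1 - exp(-l ξ) has a density on [0,1] bounded above by e^2 for all l ≥ 2. -/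
open MeasureTheory Real Set
open scoped ENNReal

private lemma gderiv (l : ℕ) (hl : 2 ≤ l) {y : ℝ} (hy : y < 1) :
    HasDerivAt (fun y : ℝ => 1 - (1 + Real.log (1-y)/(l:ℝ))^(l-1))
      ((((l:ℝ)-1)/((l:ℝ)*(1-y))) * (1 + Real.log (1-y)/(l:ℝ))^(l-2)) y := by
  have hL : (0:ℝ) < l := by exact_mod_cast (by omega : 0 < l)
  have h1y : (0:ℝ) < 1 - y := by linarith
  have h1 : HasDerivAt (fun y : ℝ => 1 - y) (-1) y := by
    simpa using (hasDerivAt_id y).const_sub 1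
  have h2 : HasDerivAt (fun y : ℝ => Real.log (1 - y)) ((1-y)⁻¹ * (-1)) y :=
    (Real.hasDerivAt_log h1y.ne').comp y h1
  have h4 := (((h2.div_const (l:ℝ)).const_add 1).pow (l-1)).const_sub 1
  refine h4.congr_deriv ?_
  have hll : ((l - 1 : ℕ) : ℝ) = (l:ℝ) - 1 := by
    rw [Nat.cast_sub (by omega)]; norm_num
  have e : (1 - y)⁻¹ * -1 / (l:ℝ) = -( ((l:ℝ)*(1-y))⁻¹ ) := by
    rw [mul_inv]; field_simp
  rw [show l - 1 - 1 = l - 2 by omega, hll, e, div_eq_mul_inv]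
  ring

private lemma gbound (l : ℕ) (hl : 2 ≤ l) {y : ℝ} (h0 : 0 ≤ y)
    (h1 : y ≤ 1 - Real.exp (-(l:ℝ))) :
    ((l:ℝ)-1)/((l:ℝ)*(1-y)) * (1 + Real.log (1-y)/(l:ℝ))^(l-2) ≤ Real.exp 2 := by
  have hL : (0:ℝ) < l := by exact_mod_cast (by omega : 0 < l)
  have hy1 : Real.exp (-(l:ℝ)) ≤ 1 - y := by linarith
  have hy1' : (0:ℝ) < 1 - y := lt_of_lt_of_le (Real.exp_pos _) hy1
  set s : ℝ := -Real.log (1-y) / (l:ℝ) with hs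
  have hlog0 : Real.log (1-y) ≤ 0 := Real.log_nonpos (by linarith) (by linarith)
  have hlogL : -(l:ℝ) ≤ Real.log (1-y) := by
    rw [← Real.log_exp (-(l:ℝ))]
    exact Real.log_le_log (Real.exp_pos _) hy1
  have hs0 : 0 ≤ s := div_nonneg (by linarith) hL.le
  have hs1 : s ≤ 1 := by
    rw [hs, div_le_one hL]; linarith
  have hu : 1 + Real.log (1-y)/(l:ℝ) = 1 - s := by
    rw [hs]; ring
  have hinv : (1-y)⁻¹ = Real.exp ((l:ℝ)*s) := by
    have : (l:ℝ)*s = -Real.log (1-y) := by rw [hs]; field_simp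
    rw [this, Real.exp_neg, Real.exp_log hy1']
  have hcast : ((l-2:ℕ):ℝ) = (l:ℝ) - 2 := by
    rw [Nat.cast_sub hl]; norm_num
  have hpow : (1-s)^(l-2) ≤ Real.exp (((l:ℝ)-2) * (-s)) := by
    calc (1-s)^(l-2) ≤ (Real.exp (-s))^(l-2) :=
          pow_le_pow_left₀ (by linarith) (by linarith [Real.add_one_le_exp (-s)]) _
      _ = Real.exp (((l-2:ℕ):ℝ) * (-s)) := (Real.exp_nat_mul _ _).symm
      _ = Real.exp (((l:ℝ)-2) * (-s)) := by rw [hcast]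
  have key : (1-y)⁻¹ * (1-s)^(l-2) ≤ Real.exp 2 := by
    calc (1-y)⁻¹ * (1-s)^(l-2) ≤ Real.exp ((l:ℝ)*s) * Real.exp (((l:ℝ)-2) * (-s)) := by
          rw [hinv]
          exact mul_le_mul_of_nonneg_left hpow (Real.exp_pos _).le
      _ = Real.exp (2*s) := by rw [← Real.exp_add]; ring_nf
      _ ≤ Real.exp 2 := Real.exp_le_exp.2 (by linarith)
  have hfrac : ((l:ℝ)-1)/(l:ℝ) ≤ 1 := by
    rw [div_le_one hL]; linarith
  calc ((l:ℝ)-1)/((l:ℝ)*(1-y)) * (1 + Real.log (1-y)/(l:ℝ))^(l-2)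
      = ((l:ℝ)-1)/(l:ℝ) * ((1-y)⁻¹ * (1-s)^(l-2)) := by
        rw [hu, div_mul_eq_div_div]; ring
    _ ≤ 1 * Real.exp 2 := by
        apply mul_le_mul hfrac key
          (mul_nonneg (inv_nonneg.2 hy1'.le) (pow_nonneg (by linarith) _)) zero_le_one
    _ = Real.exp 2 := one_mul _

private lemma gcont (l : ℕ) (hl : 2 ≤ l) :
    ContinuousOn (fun y : ℝ => ((l:ℝ)-1)/((l:ℝ)*(1-y)) * (1 + Real.log (1-y)/(l:ℝ))^(l-2))
      (Set.Iio 1) := by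
  have hL : (0:ℝ) < l := by exact_mod_cast (by omega : 0 < l)
  have hsub : ContinuousOn (fun y : ℝ => 1 - y) (Set.Iio 1) :=
    (continuous_const.sub continuous_id).continuousOn
  have hne : ∀ x ∈ Set.Iio (1:ℝ), 1 - x ≠ 0 := fun x hx => by
    have : x < 1 := hx; linarith [sub_ne_zero_of_ne (ne_of_gt (by linarith : (1:ℝ) > x))]
  apply ContinuousOn.mul
  · exact continuousOn_const.div (continuousOn_const.mul hsub)
      (fun x hx => mul_ne_zero hL.ne' (hne x hx))
  · exact (continuousOn_const.add ((hsub.log hne).div_const _)).pow _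

private lemma keyint (l : ℕ) (hl : 2 ≤ l) {a : ℝ} (ha0 : 0 ≤ a)
    (hac : a ≤ 1 - Real.exp (-(l:ℝ))) :
    ∫⁻ y in Set.Icc 0 a,
        ENNReal.ofReal (((l:ℝ)-1)/((l:ℝ)*(1-y)) * (1 + Real.log (1-y)/(l:ℝ))^(l-2)) =
      ENNReal.ofReal (1 - (1 + Real.log (1-a)/(l:ℝ))^(l-1)) := by
  have hL : (0:ℝ) < l := by exact_mod_cast (by omega : 0 < l)
  have ha1 : a < 1 := lt_of_le_of_lt hac (by linarith [Real.exp_pos (-(l:ℝ))])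
  set g : ℝ → ℝ := fun y => ((l:ℝ)-1)/((l:ℝ)*(1-y)) * (1 + Real.log (1-y)/(l:ℝ))^(l-2) with hg
  have hIcc : Set.Icc (0:ℝ) a ⊆ Set.Iio 1 := fun x hx => lt_of_le_of_lt hx.2 ha1
  have hcont : ContinuousOn g (Set.Icc 0 a) := (gcont l hl).mono hIcc
  have hint : IntegrableOn g (Set.Icc 0 a) := hcont.integrableOn_Icc
  have hnn : 0 ≤ᵐ[volume.restrict (Set.Icc 0 a)] g := by
    refine (ae_restrict_iff' measurableSet_Icc).2 (ae_of_all _ fun y hy => ?_)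
    have hy1 : (0:ℝ) < 1 - y := by
      have := hy.2; linarith
    have hu : 0 ≤ 1 + Real.log (1-y)/(l:ℝ) := by
      have hlogL : -(l:ℝ) ≤ Real.log (1-y) := by
        rw [← Real.log_exp (-(l:ℝ))]
        exact Real.log_le_log (Real.exp_pos _) (by linarith [hy.2, hac])
      have : -1 ≤ Real.log (1-y)/(l:ℝ) := by
        rw [le_div_iff₀ hL]; linarith
      linarith
    exact mul_nonneg (div_nonneg (by linarith [(show (2:ℝ) ≤ l by exact_mod_cast hl)])
      (by positivity)) (pow_nonneg hu _)
  rw [← MeasureTheory.ofReal_integral_eq_lintegral_ofReal hint hnn]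
  congr 1
  have hI : ∫ y in Set.Icc 0 a, g y = ∫ y in (0:ℝ)..a, g y := by
    rw [intervalIntegral.integral_of_le ha0, MeasureTheory.integral_Icc_eq_integral_Ioc]
  rw [hI]
  have hFTC : ∫ y in (0:ℝ)..a, g y =
      (fun y : ℝ => 1 - (1 + Real.log (1-y)/(l:ℝ))^(l-1)) a -
      (fun y : ℝ => 1 - (1 + Real.log (1-y)/(l:ℝ))^(l-1)) 0 := by
    apply intervalIntegral.integral_eq_sub_of_hasDerivAt
    · intro y hy
      rw [Set.uIcc_of_le ha0] at hy
      exact gderiv l hl (lt_of_le_of_lt hy.2 ha1)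
    · rw [hg]
      apply ContinuousOn.intervalIntegrable
      rwa [Set.uIcc_of_le ha0]
  rw [hFTC]
  simp [Real.log_one]

theorem stmt3 (l : ℕ) (hl : 2 ≤ l)
    {Ω : Type*} [MeasurableSpace Ω] (P : Measure Ω) [IsProbabilityMeasure P]
    (ξ : Ω → ℝ) (hmeas : Measurable ξ)
    (hcdf : ∀ α ∈ Set.Icc (0 : ℝ) 1,
      (P {ω | ξ ω ≤ α}).toReal = 1 - (1 - α) ^ (l - 1)) :
    ∃ f : ℝ → ℝ≥0∞,
      Measure.map (fun ω => 1 - Real.exp (-(l : ℝ) * ξ ω)) P =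
        (volume : Measure ℝ).withDensity f ∧
      (∀ y : ℝ, f y ≤ ENNReal.ofReal (Real.exp 2)) ∧
      (∀ y : ℝ, y ∉ Set.Icc (0 : ℝ) 1 → f y = 0) := by
  classical
  have hL : (0:ℝ) < l := by exact_mod_cast (by omega : 0 < l)
  set c : ℝ := 1 - Real.exp (-(l:ℝ)) with hcdef
  have hc1 : c < 1 := by
    have := Real.exp_pos (-(l:ℝ)); simp only [hcdef]; linarith
  have hc0 : 0 ≤ c := by
    have : Real.exp (-(l:ℝ)) ≤ 1 := Real.exp_le_one_iff.2 (by linarith)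
    simp only [hcdef]; linarith
  set g : ℝ → ℝ := fun y => ((l:ℝ)-1)/((l:ℝ)*(1-y)) * (1 + Real.log (1-y)/(l:ℝ))^(l-2)
    with hgdef
  set f : ℝ → ℝ≥0∞ := (Set.Icc 0 c).indicator (fun y => ENNReal.ofReal (g y)) with hfdef
  have hYmeas : Measurable (fun ω => 1 - Real.exp (-(l : ℝ) * ξ ω)) := by
    exact measurable_const.sub ((hmeas.const_mul _).exp)
  have hgm : Measurable (fun y : ℝ => ENNReal.ofReal (g y)) := by
    apply ENNReal.measurable_ofReal.comp
    refine Measurable.mul ?_ ?_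
    · exact measurable_const.div ((measurable_const.sub measurable_id).const_mul _)
    · exact (((((measurable_const.sub measurable_id).log).div_const _).const_add 1)).pow_const _
  have hfm : Measurable f := hgm.indicator measurableSet_Icc
  have hfbound : ∀ y : ℝ, f y ≤ ENNReal.ofReal (Real.exp 2) := by
    intro y
    by_cases hy : y ∈ Set.Icc 0 c
    · rw [hfdef, Set.indicator_of_mem hy]
      exact ENNReal.ofReal_le_ofReal (gbound l hl hy.1 hy.2)
    · rw [hfdef, Set.indicator_of_notMem hy]; exact zero_le
  have hfzero : ∀ y : ℝ, y ∉ Set.Icc (0:ℝ) 1 → f y = 0 := by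
    intro y hy
    exact Set.indicator_of_notMem (fun h => hy ⟨h.1, le_trans h.2 hc1.le⟩) _
  refine ⟨f, ?_, hfbound, hfzero⟩
  have hfin : IsFiniteMeasure (volume.withDensity f) := by
    constructor
    rw [withDensity_apply _ MeasurableSet.univ, Measure.restrict_univ]
    calc ∫⁻ y, f y
        ≤ ∫⁻ y, (Set.Icc 0 c).indicator (fun _ => ENNReal.ofReal (Real.exp 2)) y := by
          apply lintegral_mono
          intro y
          by_cases hy : y ∈ Set.Icc 0 c
          · rw [Set.indicator_of_mem hy]
            exact hfbound y
          · rw [hfdef, Set.indicator_of_notMem hy, Set.indicator_of_notMem hy]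
      _ = ENNReal.ofReal (Real.exp 2) * volume (Set.Icc 0 c) := by
          rw [lintegral_indicator measurableSet_Icc _, setLIntegral_const]
      _ < ⊤ := by
          apply ENNReal.mul_lt_top ENNReal.ofReal_lt_top
          rw [Real.volume_Icc]; exact ENNReal.ofReal_lt_top
  have hmapfin : IsFiniteMeasure (Measure.map (fun ω => 1 - Real.exp (-(l : ℝ) * ξ ω)) P) :=
    Measure.isFiniteMeasure_map P _
  refine Measure.ext_of_Iic _ _ (fun a => ?_)
  rw [Measure.map_apply hYmeas measurableSet_Iic, withDensity_apply _ measurableSet_Iic]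
  have hpre : (fun ω => 1 - Real.exp (-(l : ℝ) * ξ ω)) ⁻¹' Set.Iic a
      = {ω | 1 - Real.exp (-(l:ℝ) * ξ ω) ≤ a} := rfl
  rw [hpre]
  have hRHS : ∫⁻ y in Set.Iic a, f y
      = ∫⁻ y in Set.Icc 0 c ∩ Set.Iic a, ENNReal.ofReal (g y) := by
    rw [hfdef, lintegral_indicator measurableSet_Icc _,
      Measure.restrict_restrict measurableSet_Icc]
  rw [hRHS]
  have hP0 : P {ω | ξ ω ≤ 0} = 0 := by
    have h := hcdf 0 ⟨le_refl 0, zero_le_one⟩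
    simp only [sub_zero, one_pow, sub_self] at h
    rcases (ENNReal.toReal_eq_zero_iff _).1 h with h' | h'
    · exact h'
    · exact absurd h' (measure_ne_top P _)
  have hP1 : P {ω | ξ ω ≤ 1} = 1 := by
    have h := hcdf 1 ⟨zero_le_one, le_refl 1⟩
    rw [sub_self, zero_pow (by omega : l - 1 ≠ 0), sub_zero] at h
    have h2 := ENNReal.ofReal_toReal (measure_ne_top P {ω | ξ ω ≤ 1})
    rw [h] at h2
    rw [← h2]; norm_num
  rcases lt_or_ge a 0 with ha | ha
  · -- a < 0 : both sides zero
    have hsub : {ω | 1 - Real.exp (-(l:ℝ) * ξ ω) ≤ a} ⊆ {ω | ξ ω ≤ 0} := by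
      intro ω hω
      simp only [Set.mem_setOf_eq] at hω ⊢
      by_contra h
      push_neg at h
      have : Real.exp (-(l:ℝ) * ξ ω) < 1 :=
        Real.exp_lt_one_iff.2 (by nlinarith)
      linarith
    rw [measure_mono_null hsub hP0]
    have hempty : Set.Icc 0 c ∩ Set.Iic a = (∅ : Set ℝ) := by
      ext x
      simp only [Set.mem_inter_iff, Set.mem_Icc, Set.mem_Iic, Set.mem_empty_iff_false,
        iff_false, not_and]
      intro h1 h2
      linarith [h1.1]
    rw [hempty, Measure.restrict_empty, lintegral_zero_measure]
  rcases le_or_gt a c with hac | hac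
  · -- 0 ≤ a ≤ c
    have h1a : 0 < 1 - a := by linarith
    set t : ℝ := -Real.log (1-a)/(l:ℝ) with htdef
    have hseteq : {ω | 1 - Real.exp (-(l:ℝ) * ξ ω) ≤ a} = {ω | ξ ω ≤ t} := by
      ext ω
      simp only [Set.mem_setOf_eq]
      rw [show (1 - Real.exp (-(l:ℝ) * ξ ω) ≤ a) ↔ (1 - a ≤ Real.exp (-(l:ℝ) * ξ ω)) from
        ⟨fun h => by linarith, fun h => by linarith⟩,
        ← Real.log_le_iff_le_exp h1a, htdef, le_div_iff₀ hL]
      constructor <;> intro h <;> nlinarith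
    have hlog0 : Real.log (1-a) ≤ 0 := Real.log_nonpos (by linarith) (by linarith)
    have hlogL : -(l:ℝ) ≤ Real.log (1-a) := by
      rw [← Real.log_exp (-(l:ℝ))]
      exact Real.log_le_log (Real.exp_pos _) (by simp only [hcdef] at hac; linarith)
    have ht0 : 0 ≤ t := div_nonneg (by linarith) hL.le
    have ht1 : t ≤ 1 := by rw [htdef, div_le_one hL]; linarith
    have h := hcdf t ⟨ht0, ht1⟩
    have hPt : P {ω | ξ ω ≤ t} = ENNReal.ofReal (1 - (1-t)^(l-1)) := by
      rw [← h, ENNReal.ofReal_toReal (measure_ne_top _ _)]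
    have hinter : Set.Icc 0 c ∩ Set.Iic a = Set.Icc 0 a := by
      ext x
      simp only [Set.mem_inter_iff, Set.mem_Icc, Set.mem_Iic]
      constructor
      · rintro ⟨⟨h1, _⟩, h3⟩; exact ⟨h1, h3⟩
      · rintro ⟨h1, h2⟩; exact ⟨⟨h1, le_trans h2 hac⟩, h2⟩
    rw [hseteq, hPt, hinter, keyint l hl ha hac]
    congr 2
    rw [htdef]; ring
  · -- c < a
    have hsup : {ω | ξ ω ≤ 1} ⊆ {ω | 1 - Real.exp (-(l:ℝ) * ξ ω) ≤ a} := by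
      intro ω hω
      simp only [Set.mem_setOf_eq] at hω ⊢
      have : Real.exp (-(l:ℝ)) ≤ Real.exp (-(l:ℝ) * ξ ω) := by
        apply Real.exp_le_exp.2; nlinarith
      simp only [hcdef] at hac
      linarith
    have hLHS : P {ω | 1 - Real.exp (-(l:ℝ) * ξ ω) ≤ a} = 1 := by
      refine le_antisymm prob_le_one ?_
      calc (1:ℝ≥0∞) = P {ω | ξ ω ≤ 1} := hP1.symm
        _ ≤ _ := measure_mono hsup
    have hinter : Set.Icc 0 c ∩ Set.Iic a = Set.Icc 0 c := by
      apply Set.inter_eq_self_of_subset_left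
      intro x hx
      exact le_trans hx.2 hac.le
    rw [hLHS, hinter, keyint l hl hc0 (le_refl c)]
    rw [show (1:ℝ) - c = Real.exp (-(l:ℝ)) from by rw [hcdef]; ring, Real.log_exp]
    rw [show 1 + -(l:ℝ)/(l:ℝ) = 0 from by field_simp; norm_num]
    rw [zero_pow (by omega : l - 1 ≠ 0), sub_zero, ENNReal.ofReal_one]
end

section
/- Let (ξ_{l1}, ξ_{l2}) be the first two coordinates of a uniform random point on the unit simplex of R^l, so that P(ξ_{l1} ≤ α₁, ξ_{l2} ≤ α₂) = 1 - (1-α₁)^{l-1} - (1-α₂)^{l-1} + (1-α₁-α₂)^{l-1} when α₁ + α₂ ≤ 1. For fixed α₁, α₂ ∈ [0,1), setting α_{il} = -log(1-α_i)/l, the limit lim_{l→∞} l * Cov( 1(ξ_{l1} ≤ α_{1l}), 1(ξ_{l2} ≤ α_{2l}) ) equals -(1-α₁)(1-α₂) log(1-α₁) log(1-α₂). -/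
open Filter Topology MeasureTheory

theorem stmt7
    {Ω : Type*} [MeasurableSpace Ω] (P : Measure Ω) [IsProbabilityMeasure P]
    (ξ₁ ξ₂ : ℕ → Ω → ℝ)
    (hmeas₁ : ∀ l, Measurable (ξ₁ l)) (hmeas₂ : ∀ l, Measurable (ξ₂ l))
    (hmarg₁ : ∀ l : ℕ, ∀ α ∈ Set.Icc (0 : ℝ) 1,
      (P {ω | ξ₁ l ω ≤ α}).toReal = 1 - (1 - α) ^ (l - 1))
    (hmarg₂ : ∀ l : ℕ, ∀ α ∈ Set.Icc (0 : ℝ) 1,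
      (P {ω | ξ₂ l ω ≤ α}).toReal = 1 - (1 - α) ^ (l - 1))
    (hjoint : ∀ l : ℕ, ∀ α₁ α₂ : ℝ, 0 ≤ α₁ → 0 ≤ α₂ → α₁ + α₂ ≤ 1 →
      (P {ω | ξ₁ l ω ≤ α₁ ∧ ξ₂ l ω ≤ α₂}).toReal =
        1 - (1 - α₁) ^ (l - 1) - (1 - α₂) ^ (l - 1) + (1 - α₁ - α₂) ^ (l - 1))
    (α₁ α₂ : ℝ) (hα₁ : α₁ ∈ Set.Ico (0 : ℝ) 1) (hα₂ : α₂ ∈ Set.Ico (0 : ℝ) 1) :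
    Tendsto
      (fun l : ℕ =>
        (l : ℝ) *
          ((P {ω | ξ₁ l ω ≤ -Real.log (1 - α₁) / l ∧
              ξ₂ l ω ≤ -Real.log (1 - α₂) / l}).toReal -
            (P {ω | ξ₁ l ω ≤ -Real.log (1 - α₁) / l}).toReal *
              (P {ω | ξ₂ l ω ≤ -Real.log (1 - α₂) / l}).toReal))
      atTop
      (𝓝 (-(1 - α₁) * (1 - α₂) * Real.log (1 - α₁) * Real.log (1 - α₂))) := by
  obtain ⟨h10, h11⟩ := hα₁
  obtain ⟨h20, h21⟩ := hα₂
  have h1pos : (0:ℝ) < 1 - α₁ := by linarith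
  have h2pos : (0:ℝ) < 1 - α₂ := by linarith
  set a : ℝ := -Real.log (1 - α₁) with ha_def
  set b : ℝ := -Real.log (1 - α₂) with hb_def
  have ha : 0 ≤ a := neg_nonneg.mpr (Real.log_nonpos (by linarith) (by linarith))
  have hb : 0 ≤ b := neg_nonneg.mpr (Real.log_nonpos (by linarith) (by linarith))
  have hea : Real.exp (-a) = 1 - α₁ := by rw [ha_def, neg_neg, Real.exp_log h1pos]
  have heb : Real.exp (-b) = 1 - α₂ := by rw [hb_def, neg_neg, Real.exp_log h2pos]
  have hla : Real.log (1 - α₁) = -a := by rw [ha_def, neg_neg]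
  have hlb : Real.log (1 - α₂) = -b := by rw [hb_def, neg_neg]
  have heab : Real.exp (-(a + b)) = (1 - α₁) * (1 - α₂) := by
    rw [neg_add, Real.exp_add, hea, heb]
  have hval : -(1 - α₁) * (1 - α₂) * Real.log (1 - α₁) * Real.log (1 - α₂)
      = -(a * b) * Real.exp (-(a + b)) := by
    rw [hla, hlb, heab]; ring
  rw [hval]
  set g : ℕ → ℝ := fun l =>
    (l : ℝ) * ((1 - (a + b) / l) ^ (l - 1) - ((1 - a / l) * (1 - b / l)) ^ (l - 1)) with hg
  have hev : ∀ᶠ l : ℕ in atTop, a + b + 1 ≤ (l : ℝ) ∧ 2 ≤ l := by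
    filter_upwards [tendsto_natCast_atTop_atTop.eventually_ge_atTop (a + b + 1),
      eventually_ge_atTop 2] with l h1 h2
    exact ⟨h1, h2⟩
  -- Step 1 : the limit of g
  have hmain : Tendsto g atTop (𝓝 (-(a * b) * Real.exp (-(a + b)))) := by
    have hu : Tendsto (fun l : ℕ => (1 - (a + b) / l) ^ l) atTop
        (𝓝 (Real.exp (-(a + b)))) := by
      exact (Real.tendsto_one_add_div_pow_exp (-(a + b))).congr fun l => by
        rw [neg_div, ← sub_eq_add_neg]
    have hva : Tendsto (fun l : ℕ => (1 - a / l) ^ l) atTop (𝓝 (Real.exp (-a))) := by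
      exact (Real.tendsto_one_add_div_pow_exp (-a)).congr fun l => by
        rw [neg_div, ← sub_eq_add_neg]
    have hvb : Tendsto (fun l : ℕ => (1 - b / l) ^ l) atTop (𝓝 (Real.exp (-b))) := by
      exact (Real.tendsto_one_add_div_pow_exp (-b)).congr fun l => by
        rw [neg_div, ← sub_eq_add_neg]
    have hv : Tendsto (fun l : ℕ => ((1 - a / l) * (1 - b / l)) ^ l) atTop
        (𝓝 (Real.exp (-(a + b)))) := by
      have h := hva.mul hvb
      rw [← Real.exp_add, ← neg_add] at h
      simpa [mul_pow] using h
    have hu1 : Tendsto (fun l : ℕ => 1 - (a + b) / (l : ℝ)) atTop (𝓝 1) := by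
      simpa using tendsto_const_nhds.sub (tendsto_const_div_atTop_nhds_zero_nat (a + b))
    have hv1 : Tendsto (fun l : ℕ => (1 - a / (l : ℝ)) * (1 - b / (l : ℝ))) atTop (𝓝 1) := by
      have h1 : Tendsto (fun l : ℕ => 1 - a / (l : ℝ)) atTop (𝓝 1) := by
        simpa using tendsto_const_nhds.sub (tendsto_const_div_atTop_nhds_zero_nat a)
      have h2 : Tendsto (fun l : ℕ => 1 - b / (l : ℝ)) atTop (𝓝 1) := by
        simpa using tendsto_const_nhds.sub (tendsto_const_div_atTop_nhds_zero_nat b)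
      simpa using h1.mul h2
    have huL : Tendsto (fun l : ℕ => (1 - (a + b) / l) ^ (l - 2)) atTop
        (𝓝 (Real.exp (-(a + b)))) := by
      have hdiv : Tendsto (fun l : ℕ => (1 - (a + b) / l) ^ l / (1 - (a + b) / l) ^ 2)
          atTop (𝓝 (Real.exp (-(a + b)))) := by
        simpa [Pi.div_def] using hu.div (hu1.pow 2) (by norm_num)
      refine hdiv.congr' ?_
      filter_upwards [hev] with l ⟨hl1, hl2⟩
      have lpos : (0:ℝ) < l := by linarith
      have hune : (1 : ℝ) - (a + b) / l ≠ 0 := by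
        have h : (a + b) / (l:ℝ) < 1 := (div_lt_one lpos).mpr (by linarith)
        intro hc; rw [sub_eq_zero] at hc; exact absurd hc.symm (ne_of_lt h)
      rw [pow_sub₀ _ hune hl2, div_eq_mul_inv]
    have hvL : Tendsto (fun l : ℕ => ((1 - a / l) * (1 - b / l)) ^ (l - 2)) atTop
        (𝓝 (Real.exp (-(a + b)))) := by
      have hdiv : Tendsto
          (fun l : ℕ => ((1 - a / l) * (1 - b / l)) ^ l / ((1 - a / l) * (1 - b / l)) ^ 2)
          atTop (𝓝 (Real.exp (-(a + b)))) := by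
        simpa [Pi.div_def] using hv.div (hv1.pow 2) (by norm_num)
      refine hdiv.congr' ?_
      filter_upwards [hev] with l ⟨hl1, hl2⟩
      have lpos : (0:ℝ) < l := by linarith
      have h1 : (0:ℝ) < 1 - a / l := by
        have h : a / (l:ℝ) < 1 := (div_lt_one lpos).mpr (by linarith)
        linarith
      have h2 : (0:ℝ) < 1 - b / l := by
        have h : b / (l:ℝ) < 1 := (div_lt_one lpos).mpr (by linarith)
        linarith
      rw [pow_sub₀ _ (by positivity) hl2, div_eq_mul_inv]
    have hq : Tendsto (fun l : ℕ => ((l : ℝ) - 1) / l) atTop (𝓝 1) := by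
      have h1 : Tendsto (fun l : ℕ => 1 - 1 / (l : ℝ)) atTop (𝓝 1) := by
        simpa using tendsto_const_nhds.sub (tendsto_const_div_atTop_nhds_zero_nat (1:ℝ))
      refine h1.congr' ?_
      filter_upwards [eventually_ge_atTop 1] with l hl
      have hne : (l : ℝ) ≠ 0 := by positivity
      field_simp
    have hlow : Tendsto (fun l : ℕ => -(a * b) * (((l : ℝ) - 1) / l *
        ((1 - a / l) * (1 - b / l)) ^ (l - 2))) atTop
        (𝓝 (-(a * b) * Real.exp (-(a + b)))) := by
      have h := (hq.mul hvL).const_mul (-(a * b))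
      rw [one_mul] at h
      exact h
    have hupp : Tendsto (fun l : ℕ => -(a * b) * (((l : ℝ) - 1) / l *
        (1 - (a + b) / l) ^ (l - 2))) atTop
        (𝓝 (-(a * b) * Real.exp (-(a + b)))) := by
      have h := (hq.mul huL).const_mul (-(a * b))
      rw [one_mul] at h
      exact h
    have hbounds : ∀ᶠ l : ℕ in atTop,
        -(a * b) * (((l : ℝ) - 1) / l * ((1 - a / l) * (1 - b / l)) ^ (l - 2)) ≤ g l ∧
        g l ≤ -(a * b) * (((l : ℝ) - 1) / l * (1 - (a + b) / l) ^ (l - 2)) := by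
      filter_upwards [hev] with l ⟨hl1, hl2⟩
      have lpos : (0:ℝ) < l := by linarith
      have hL : (l : ℝ) ≠ 0 := ne_of_gt lpos
      set u : ℝ := 1 - (a + b) / (l : ℝ) with hu_def
      set v : ℝ := (1 - a / (l : ℝ)) * (1 - b / (l : ℝ)) with hv_def
      have h0u : 0 ≤ u := by
        have h : (a + b) / (l:ℝ) ≤ 1 := (div_le_one lpos).mpr (by linarith)
        rw [hu_def]; linarith
      have hvu : v = u + a * b / ((l:ℝ) * l) := by
        rw [hu_def, hv_def]; field_simp; ring
      have huv : u ≤ v := by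
        rw [hvu]
        have h : 0 ≤ a * b / ((l:ℝ) * l) := by positivity
        linarith
      have h0v : 0 ≤ v := le_trans h0u huv
      set n : ℕ := l - 1 with hn_def
      have hncast : (n : ℝ) = (l : ℝ) - 1 := by
        rw [hn_def, Nat.cast_sub (by omega)]; simp
      have hnm : n - 1 = l - 2 := by omega
      have key : (∑ i ∈ Finset.range n, v ^ i * u ^ (n - 1 - i)) * (v - u) = v ^ n - u ^ n :=
        geom_sum₂_mul v u n
      set S : ℝ := ∑ i ∈ Finset.range n, v ^ i * u ^ (n - 1 - i) with hS_def
      have hS1 : (n : ℝ) * u ^ (n - 1) ≤ S := by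
        rw [hS_def]
        calc (n : ℝ) * u ^ (n - 1) = ∑ _i ∈ Finset.range n, u ^ (n - 1) := by
              simp [Finset.sum_const, nsmul_eq_mul]
          _ ≤ ∑ i ∈ Finset.range n, v ^ i * u ^ (n - 1 - i) := by
              refine Finset.sum_le_sum fun i hi => ?_
              have hi' : i ≤ n - 1 := Nat.le_pred_of_lt (Finset.mem_range.mp hi)
              calc u ^ (n - 1) = u ^ i * u ^ (n - 1 - i) := by
                    rw [← pow_add, Nat.add_sub_cancel' hi']
                _ ≤ v ^ i * u ^ (n - 1 - i) :=
                    mul_le_mul_of_nonneg_right (pow_le_pow_left₀ h0u huv i) (pow_nonneg h0u _)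
      have hS2 : S ≤ (n : ℝ) * v ^ (n - 1) := by
        rw [hS_def]
        calc (∑ i ∈ Finset.range n, v ^ i * u ^ (n - 1 - i))
            ≤ ∑ _i ∈ Finset.range n, v ^ (n - 1) := by
              refine Finset.sum_le_sum fun i hi => ?_
              have hi' : i ≤ n - 1 := Nat.le_pred_of_lt (Finset.mem_range.mp hi)
              calc v ^ i * u ^ (n - 1 - i) ≤ v ^ i * v ^ (n - 1 - i) :=
                    mul_le_mul_of_nonneg_left (pow_le_pow_left₀ h0u huv _) (pow_nonneg h0v _)
                _ = v ^ (n - 1) := by rw [← pow_add, Nat.add_sub_cancel' hi']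
          _ = (n : ℝ) * v ^ (n - 1) := by simp [Finset.sum_const, nsmul_eq_mul]
      have hgS : g l = -(a * b / l) * S := by
        have hdiff : v ^ n - u ^ n = S * (a * b / ((l:ℝ) * l)) := by
          rw [← key, hvu]; ring
        rw [hg]
        show (l:ℝ) * (u ^ n - v ^ n) = -(a * b / l) * S
        have hd : u ^ n - v ^ n = -(S * (a * b / ((l:ℝ) * l))) := by linarith
        rw [hd]
        field_simp
      have habL : 0 ≤ a * b / (l : ℝ) := by positivity
      constructor
      · have heq : -(a * b) * (((l : ℝ) - 1) / l * v ^ (l - 2))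
            = -(a * b / l) * ((n : ℝ) * v ^ (n - 1)) := by
          rw [hnm, hncast]; ring
        have hmul := mul_le_mul_of_nonneg_left hS2 habL
        rw [hgS, heq]
        linarith
      · have heq : -(a * b) * (((l : ℝ) - 1) / l * u ^ (l - 2))
            = -(a * b / l) * ((n : ℝ) * u ^ (n - 1)) := by
          rw [hnm, hncast]; ring
        have hmul := mul_le_mul_of_nonneg_left hS1 habL
        rw [hgS, heq]
        linarith
    exact tendsto_of_tendsto_of_tendsto_of_le_of_le' hlow hupp
      (hbounds.mono fun l h => h.1) (hbounds.mono fun l h => h.2)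
  -- Step 2 : eventual equality of g with the probability expression
  refine hmain.congr' ?_
  filter_upwards [hev] with l ⟨hl1, hl2⟩
  have lpos : (0:ℝ) < l := by linarith
  have hmem₁ : a / (l : ℝ) ∈ Set.Icc (0:ℝ) 1 :=
    ⟨div_nonneg ha lpos.le, (div_le_one lpos).mpr (by linarith)⟩
  have hmem₂ : b / (l : ℝ) ∈ Set.Icc (0:ℝ) 1 :=
    ⟨div_nonneg hb lpos.le, (div_le_one lpos).mpr (by linarith)⟩
  have hsum : a / (l : ℝ) + b / l ≤ 1 := by
    rw [← add_div]; exact (div_le_one lpos).mpr (by linarith)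
  rw [hjoint l (a / l) (b / l) hmem₁.1 hmem₂.1 hsum, hmarg₁ l _ hmem₁, hmarg₂ l _ hmem₂]
  simp only [hg]
  have hbase : (1:ℝ) - (a + b) / l = 1 - a / l - b / l := by rw [add_div]; ring
  rw [hbase, mul_pow]
  ring
end

section
/- Let ξ_{l1} have CDF P(ξ_{l1} ≤ α) = 1 - (1-α)^{l-1} on [0,1], and set α_{il} = -log(1-α_i)/l. Then for fixed α₁, α₂ ∈ [0,1), lim_{l→∞} Cov( 1(ξ_{l1} ≤ α_{1l}), 1(ξ_{l1} ≤ α_{2l}) ) = (α₁ ∧ α₂)(1 - (α₁ ∨ α₂)). -/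
open Filter Topology MeasureTheory

private lemma aux_pow (c : ℝ) (hc : 0 ≤ c) :
    Tendsto (fun l : ℕ => (1 - c / l) ^ (l - 1)) atTop (𝓝 (Real.exp (-c))) := by
  have h1 : Tendsto (fun l : ℕ => (1 + (-c) / l) ^ l) atTop (𝓝 (Real.exp (-c))) :=
    Real.tendsto_one_add_div_pow_exp (-c)
  have h2 : Tendsto (fun l : ℕ => (1 + (-c) / l)) atTop (𝓝 1) := by
    simpa using (tendsto_const_div_atTop_nhds_zero_nat (-c)).const_add 1
  have h3 := h1.div h2 one_ne_zero
  rw [div_one] at h3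
  refine h3.congr' ?_
  filter_upwards [eventually_gt_atTop (Nat.ceil c)] with l hl
  have hl1 : 1 ≤ l := by omega
  have hcl : c < (l : ℝ) := lt_of_le_of_lt (Nat.le_ceil c) (by exact_mod_cast hl)
  have hlpos : (0 : ℝ) < l := lt_of_le_of_lt hc hcl
  have hx : (0 : ℝ) < 1 - c / l := by
    rw [sub_pos, div_lt_one hlpos]; exact hcl
  have : (1 : ℝ) + (-c) / l = 1 - c / l := by ring
  simp only [Pi.div_apply]
  rw [this, div_eq_iff hx.ne', ← pow_succ, Nat.sub_add_cancel hl1]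

theorem stmt8 (μ : ℕ → Measure ℝ) (hprob : ∀ l, IsProbabilityMeasure (μ l))
    (hcdf : ∀ l : ℕ, ∀ α ∈ Set.Icc (0 : ℝ) 1,
      ((μ l) (Set.Iic α)).toReal = 1 - (1 - α) ^ (l - 1))
    (α₁ α₂ : ℝ) (hα₁ : α₁ ∈ Set.Ico (0 : ℝ) 1) (hα₂ : α₂ ∈ Set.Ico (0 : ℝ) 1) :
    Tendsto
      (fun l : ℕ =>
        ((μ l) (Set.Iic (min (-Real.log (1 - α₁) / l)
            (-Real.log (1 - α₂) / l)))).toReal -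
          ((μ l) (Set.Iic (-Real.log (1 - α₁) / l))).toReal *
            ((μ l) (Set.Iic (-Real.log (1 - α₂) / l))).toReal)
      atTop (𝓝 (min α₁ α₂ * (1 - max α₁ α₂))) := by
  obtain ⟨hα₁0, hα₁1⟩ := hα₁
  obtain ⟨hα₂0, hα₂1⟩ := hα₂
  set c₁ := -Real.log (1 - α₁) with hc₁def
  set c₂ := -Real.log (1 - α₂) with hc₂def
  have h1pos : (0 : ℝ) < 1 - α₁ := by linarith
  have h2pos : (0 : ℝ) < 1 - α₂ := by linarith
  have hc₁ : 0 ≤ c₁ := by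
    have := Real.log_nonpos (by linarith) (by linarith : 1 - α₁ ≤ 1)
    simp [hc₁def]; linarith
  have hc₂ : 0 ≤ c₂ := by
    have := Real.log_nonpos (by linarith) (by linarith : 1 - α₂ ≤ 1)
    simp [hc₂def]; linarith
  have hexp₁ : Real.exp (-c₁) = 1 - α₁ := by rw [hc₁def, neg_neg, Real.exp_log h1pos]
  have hexp₂ : Real.exp (-c₂) = 1 - α₂ := by rw [hc₂def, neg_neg, Real.exp_log h2pos]
  -- general limit for the CDF at c / l
  have key : ∀ c : ℝ, 0 ≤ c → Real.exp (-c) ≤ 1 →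
      Tendsto (fun l : ℕ => ((μ l) (Set.Iic (c / l))).toReal) atTop
        (𝓝 (1 - Real.exp (-c))) := by
    intro c hc _
    have h := tendsto_const_nhds.sub (aux_pow c hc) (f := fun _ : ℕ => (1 : ℝ))
    refine h.congr' ?_
    filter_upwards [eventually_gt_atTop (Nat.ceil c)] with l hl
    have hcl : c ≤ (l : ℝ) := (Nat.le_ceil c).trans (by exact_mod_cast hl.le)
    have hlpos : (0 : ℝ) < l := by
      have : (0:ℕ) < l := lt_of_le_of_lt (Nat.zero_le _) hl
      exact_mod_cast this
    have hmem : c / l ∈ Set.Icc (0 : ℝ) 1 := by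
      constructor
      · exact div_nonneg hc hlpos.le
      · rw [div_le_one hlpos]; exact hcl
    rw [hcdf l _ hmem]
  have t₁ := key c₁ hc₁ (by rw [hexp₁]; linarith)
  have t₂ := key c₂ hc₂ (by rw [hexp₂]; linarith)
  rw [hexp₁] at t₁
  rw [hexp₂] at t₂
  have tmin := key (min c₁ c₂) (le_min hc₁ hc₂)
    (Real.exp_le_one_iff.mpr (neg_nonpos.mpr (le_min hc₁ hc₂)))
  have hmexp : Real.exp (-min c₁ c₂) = 1 - min α₁ α₂ := by
    rcases le_total α₁ α₂ with h | h
    · have hc : c₁ ≤ c₂ := neg_le_neg (Real.log_le_log h2pos (by linarith))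
      rw [min_eq_left hc, hexp₁, min_eq_left h]
    · have hc : c₂ ≤ c₁ := neg_le_neg (Real.log_le_log h1pos (by linarith))
      rw [min_eq_right hc, hexp₂, min_eq_right h]
  rw [hmexp] at tmin
  have tmin' : Tendsto (fun l : ℕ =>
      ((μ l) (Set.Iic (min (c₁ / l) (c₂ / l)))).toReal) atTop (𝓝 (min α₁ α₂)) := by
    have : (1 : ℝ) - (1 - min α₁ α₂) = min α₁ α₂ := by ring
    rw [← this]
    refine tmin.congr fun l => ?_
    rw [min_div_div_right (by positivity : (0:ℝ) ≤ (l:ℝ))]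
  have final := tmin'.sub (t₁.mul t₂)
  have heq : min α₁ α₂ - (1 - (1 - α₁)) * (1 - (1 - α₂)) = min α₁ α₂ * (1 - max α₁ α₂) := by
    have := min_mul_max α₁ α₂
    nlinarith [this]
  rw [heq] at final
  simpa using final
end

section
/- For every integer l ≥ 8, sup over x₁, x₂ ∈ [l^{-3/2}, 1] of (1/l) Σ_{k=2}^l C(l,k) ( |log x₁ log x₂| / (l² + l log(x₁x₂)) )^{k-1} is bounded by a constant C independent of l. -/
open Real Finset Nat

lemma key12 (y : ℝ) (hy : 8 ≤ y) :
    0 < y - 3 * Real.log y ∧ (9/4) * (Real.log y)^2 ≤ 1000 * (y - 3 * Real.log y) := by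
  have hy0 : (0:ℝ) < y := by linarith
  set t := y ^ ((1:ℝ)/6) with htdef
  have ht0 : 0 < t := Real.rpow_pos_of_pos hy0 _
  have hty : t ^ 6 = y := by
    rw [htdef, ← Real.rpow_natCast (y ^ ((1:ℝ)/6)) 6, ← Real.rpow_mul hy0.le]
    norm_num
  have hlog : Real.log y = 6 * Real.log t := by
    rw [← hty, Real.log_pow]; push_cast; ring
  have hlt : Real.log t ≤ t - 1 := Real.log_le_sub_one_of_pos ht0
  have ht1 : (1.41 : ℝ) ≤ t := by
    apply le_of_pow_le_pow_left₀ (n := 6) (by norm_num) ht0.le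
    rw [hty]; nlinarith
  have hlt0 : 0 ≤ Real.log t := Real.log_nonneg (by linarith)
  have h1 : 0 < y - 3 * Real.log y := by
    rw [hlog, ← hty]
    nlinarith [sq_nonneg (t - 1.41), sq_nonneg (t^2 - 2), sq_nonneg (t^3 - 3),
      pow_pos ht0 3, pow_pos ht0 2]
  refine ⟨h1, ?_⟩
  rw [hlog, ← hty]
  nlinarith [sq_nonneg (t - 1.41), sq_nonneg (t^2 - 2), sq_nonneg (t^3 - 3),
    sq_nonneg (Real.log t), mul_nonneg hlt0 (sub_nonneg.2 hlt), pow_pos ht0 3,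
    pow_pos ht0 2, sq_nonneg (t-1)]

theorem stmt12 :
    ∃ C : ℝ, ∀ l : ℕ, 8 ≤ l →
      ∀ x₁ ∈ Set.Icc ((l : ℝ) ^ (-(3 / 2 : ℝ))) 1,
      ∀ x₂ ∈ Set.Icc ((l : ℝ) ^ (-(3 / 2 : ℝ))) 1,
        (1 / (l : ℝ)) *
            ∑ k ∈ Finset.Icc 2 l,
              (l.choose k : ℝ) *
                (|Real.log x₁ * Real.log x₂| /
                    ((l : ℝ) ^ 2 + l * Real.log (x₁ * x₂))) ^ (k - 1) ≤ C := by
  refine ⟨1 + Real.exp 1000, ?_⟩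
  intro l hl x₁ hx₁ x₂ hx₂
  set y : ℝ := (l : ℝ) with hydef
  have hy : (8:ℝ) ≤ y := by rw [hydef]; exact_mod_cast hl
  have hy0 : (0:ℝ) < y := by linarith
  obtain ⟨hden, hq⟩ := key12 y hy
  set L := Real.log y with hL
  have hL0 : 0 ≤ L := Real.log_nonneg (by linarith)
  -- bounds on log x₁, log x₂
  have hx10 : 0 < x₁ := lt_of_lt_of_le (Real.rpow_pos_of_pos hy0 _) hx₁.1
  have hx20 : 0 < x₂ := lt_of_lt_of_le (Real.rpow_pos_of_pos hy0 _) hx₂.1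
  have hlog1u : Real.log x₁ ≤ 0 := Real.log_nonpos hx10.le hx₁.2
  have hlog2u : Real.log x₂ ≤ 0 := Real.log_nonpos hx20.le hx₂.2
  have hlog1l : -(3/2) * L ≤ Real.log x₁ := by
    have := Real.log_le_log (Real.rpow_pos_of_pos hy0 _) hx₁.1
    rwa [Real.log_rpow hy0] at this
  have hlog2l : -(3/2) * L ≤ Real.log x₂ := by
    have := Real.log_le_log (Real.rpow_pos_of_pos hy0 _) hx₂.1
    rwa [Real.log_rpow hy0] at this
  have habs1 : |Real.log x₁| ≤ (3/2) * L := by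
    rw [abs_of_nonpos hlog1u]; linarith
  have habs2 : |Real.log x₂| ≤ (3/2) * L := by
    rw [abs_of_nonpos hlog2u]; linarith
  have hnum : |Real.log x₁ * Real.log x₂| ≤ (9/4) * L^2 := by
    rw [abs_mul]
    calc |Real.log x₁| * |Real.log x₂| ≤ ((3/2) * L) * ((3/2) * L) :=
          mul_le_mul habs1 habs2 (abs_nonneg _) (by linarith)
      _ = (9/4) * L^2 := by ring
  have hD : y * (y - 3 * L) ≤ y ^ 2 + y * Real.log (x₁ * x₂) := by
    rw [Real.log_mul hx10.ne' hx20.ne']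
    nlinarith
  have hD0 : 0 < y ^ 2 + y * Real.log (x₁ * x₂) := lt_of_lt_of_le (by positivity) hD
  set r : ℝ := |Real.log x₁ * Real.log x₂| / (y ^ 2 + y * Real.log (x₁ * x₂)) with hrdef
  have hr0 : 0 ≤ r := div_nonneg (abs_nonneg _) hD0.le
  have hyr : y * r ≤ 1000 := by
    have hr : r ≤ (9/4) * L^2 / (y * (y - 3 * L)) :=
      div_le_div₀ (by positivity) hnum (by positivity) hD
    have : y * r ≤ y * ((9/4) * L^2 / (y * (y - 3 * L))) := by
      exact mul_le_mul_of_nonneg_left hr hy0.le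
    calc y * r ≤ y * ((9/4) * L^2 / (y * (y - 3 * L))) := this
      _ = (9/4) * L^2 / (y - 3 * L) := by
          field_simp
      _ ≤ 1000 := by
          rw [div_le_iff₀ hden]; linarith
  -- termwise bound
  have hterm : ∀ k ∈ Finset.Icc 2 l,
      (1 / y) * ((l.choose k : ℝ) * r ^ (k - 1)) ≤ (1000:ℝ) ^ (k-1) / (Nat.factorial (k-1) : ℝ) := by
    intro k hk
    obtain ⟨hk2, hkl⟩ := Finset.mem_Icc.mp hk
    have hchoose : (l.choose k : ℝ) ≤ y ^ k / k ! := by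
      rw [hydef]
      exact_mod_cast Nat.choose_le_pow_div k l
    have h1 : (1 / y) * ((l.choose k : ℝ) * r ^ (k - 1)) ≤ (1/y) * (y ^ k / k ! * r ^ (k-1)) := by
      apply mul_le_mul_of_nonneg_left _ (by positivity)
      exact mul_le_mul_of_nonneg_right hchoose (pow_nonneg hr0 _)
    have hks : k = (k - 1) + 1 := by omega
    have h2 : (1/y) * (y ^ k / k ! * r ^ (k-1)) = (y*r) ^ (k-1) / k ! := by
      rw [hks]
      field_simp
      rw [Nat.add_sub_cancel]
      ring
    have h3 : (y*r) ^ (k-1) ≤ (1000:ℝ) ^ (k-1) :=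
      pow_le_pow_left₀ (by positivity) hyr _
    have h4 : (Nat.factorial (k-1) : ℝ) ≤ (k ! : ℝ) := by
      exact_mod_cast Nat.factorial_le (by omega)
    calc (1 / y) * ((l.choose k : ℝ) * r ^ (k - 1))
        ≤ (y*r) ^ (k-1) / k ! := by rw [← h2]; exact h1
      _ ≤ (1000:ℝ) ^ (k-1) / k ! := by
          apply div_le_div_of_nonneg_right h3
          positivity
      _ ≤ (1000:ℝ) ^ (k-1) / (Nat.factorial (k-1) : ℝ) := by
          apply div_le_div_of_nonneg_left (by positivity) (by positivity) h4
  calc (1 / y) * ∑ k ∈ Finset.Icc 2 l, (l.choose k : ℝ) * r ^ (k - 1)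
      = ∑ k ∈ Finset.Icc 2 l, (1/y) * ((l.choose k : ℝ) * r ^ (k - 1)) := by
        rw [Finset.mul_sum]
    _ ≤ ∑ k ∈ Finset.Icc 2 l, (1000:ℝ) ^ (k-1) / (Nat.factorial (k-1) : ℝ) := Finset.sum_le_sum hterm
    _ ≤ ∑ k ∈ Finset.range (l+1), (1000:ℝ) ^ (k-1) / (Nat.factorial (k-1) : ℝ) := by
        apply Finset.sum_le_sum_of_subset_of_nonneg
        · intro k hk
          simp only [Finset.mem_Icc] at hk
          exact Finset.mem_range.mpr (by omega)
        · intro k _ _; positivity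
    _ = 1 + ∑ j ∈ Finset.range l, (1000:ℝ) ^ j / j ! := by
        rw [Finset.sum_range_succ']
        simp
        ring
    _ ≤ 1 + Real.exp 1000 := by
        have := Real.sum_le_exp_of_nonneg (x := 1000) (by norm_num) l
        linarith
end

section
/- Let (ξ_{l1},…,ξ_{ll}) be uniform on the unit simplex of R^l, y_{lm} = 1 - exp(-l ξ_{lm}), and let Z_{lm}(α,β] = 1(α < y_{lm} ≤ β) - P(α < y_{lm} ≤ β). Then there is a constant C independent of l and the endpoints such that for all 0 ≤ α₁ < α₂ ≤ 1 - l^{-3/2} and 0 ≤ β₁ < β₂ ≤ 1 - l^{-3/2}, |E[Z_{l1}(α₁,α₂] Z_{l2}(β₁,β₂]]| ≤ (C/l) q(α₁,α₂) q(β₁,β₂), where q(a,b) = ∫_a^b (1 + |log(1-y)|) dy. -/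
open MeasureTheory
set_option maxHeartbeats 1000000

lemma aux_pow_sub_pow (w r : ℝ) (hw : 0 ≤ w) (hwr : w ≤ r) :
    ∀ m : ℕ, r ^ (m+1) - w ^ (m+1) ≤ (m+1) * r ^ m * (r - w) := by
  intro m
  induction m with
  | zero => simp
  | succ m ih =>
    have hr : 0 ≤ r := le_trans hw hwr
    have hwr' : w ^ (m+1) ≤ r ^ (m+1) := pow_le_pow_left₀ hw hwr _
    have h2 : r * (r ^ (m+1) - w ^ (m+1)) ≤ r * ((m+1) * r ^ m * (r - w)) :=
      mul_le_mul_of_nonneg_left ih hr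
    have h3 : (r - w) * w ^ (m+1) ≤ (r - w) * r ^ (m+1) :=
      mul_le_mul_of_nonneg_left hwr' (by linarith)
    have e : r^(m+1+1) - w^(m+1+1) = r*(r^(m+1)-w^(m+1)) + (r-w)*w^(m+1) := by ring
    push_cast
    have e2 : r * (((m:ℝ)+1)*r^m*(r-w)) + (r-w)*r^(m+1) = ((m:ℝ)+1+1)*r^(m+1)*(r-w) := by ring
    linarith [e, e2, h2, h3]

lemma aux_one_sub_le_exp (z : ℝ) : 1 - z ≤ Real.exp (-z) := by
  have := Real.add_one_le_exp (-z); linarith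

lemma exp_six_le : Real.exp 6 ≤ 729 := by
  have h1 : Real.exp 1 ≤ 2.7182818286 := le_of_lt Real.exp_one_lt_d9
  have h6 : Real.exp 6 = (Real.exp 1) ^ (6:ℕ) := by
    rw [← Real.exp_nat_mul]; norm_num
  rw [h6]
  calc (Real.exp 1)^(6:ℕ) ≤ 2.7182818286 ^ (6:ℕ) :=
        pow_le_pow_left₀ (le_of_lt (Real.exp_pos 1)) h1 6
    _ ≤ 729 := by norm_num

lemma ptbound (n : ℕ) (hn : 3 ≤ n) (x y : ℝ) (hx0 : 0 ≤ x) (hx1 : x ≤ 1)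
    (hy0 : 0 ≤ y) (hy1 : y ≤ 1) :
    |(if 0 ≤ x ∧ 0 ≤ y ∧ x + y ≤ 1 then ((n:ℝ)-1)*((n:ℝ)-2)*(1-x-y)^(n-3) else 0)
      - ((n:ℝ)-1)*(1-x)^(n-2) * (((n:ℝ)-1)*(1-y)^(n-2))|
    ≤ 729 * n * ((1+n*x)*(1+n*y)) * Real.exp (-(n*(x+y))) := by
  have hL3 : (3:ℝ) ≤ (n:ℝ) := by exact_mod_cast hn
  set L : ℝ := (n:ℝ) with hLdef
  have hc2 : ((n-2:ℕ):ℝ) = L - 2 := by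
    rw [Nat.cast_sub (by omega)]; norm_num; rfl
  have hc3 : ((n-3:ℕ):ℝ) = L - 3 := by
    rw [Nat.cast_sub (by omega)]; norm_num; rfl
  set ee : ℝ := Real.exp (-(x+y)) with heedef
  have hee0 : 0 ≤ ee := le_of_lt (Real.exp_pos _)
  have hr0 : 0 ≤ (1-x)*(1-y) := mul_nonneg (by linarith) (by linarith)
  have hree : (1-x)*(1-y) ≤ ee := by
    calc (1-x)*(1-y) ≤ Real.exp (-x) * Real.exp (-y) :=
          mul_le_mul (aux_one_sub_le_exp x) (aux_one_sub_le_exp y) (by linarith)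
            (le_of_lt (Real.exp_pos _))
      _ = ee := by rw [← Real.exp_add]; congr 1; ring
  have heepow : ∀ m : ℕ, ee ^ m = Real.exp (-((m:ℝ)*(x+y))) := by
    intro m
    rw [heedef, ← Real.exp_nat_mul]; congr 1; ring
  have hstep2 : ee ^ (n-3) ≤ 729 * Real.exp (-(L*(x+y))) := by
    rw [heepow, hc3]
    have h : -((L-3)*(x+y)) = 3*(x+y) + -(L*(x+y)) := by ring
    rw [h, Real.exp_add]
    have h6 : Real.exp (3*(x+y)) ≤ 729 := by
      calc Real.exp (3*(x+y)) ≤ Real.exp 6 := Real.exp_le_exp.mpr (by linarith)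
        _ ≤ 729 := exp_six_le
    exact mul_le_mul_of_nonneg_right h6 (le_of_lt (Real.exp_pos _))
  have hstep2' : ee ^ (n-2) ≤ 729 * Real.exp (-(L*(x+y))) := by
    rw [heepow, hc2]
    have h : -((L-2)*(x+y)) = 2*(x+y) + -(L*(x+y)) := by ring
    rw [h, Real.exp_add]
    have h6 : Real.exp (2*(x+y)) ≤ 729 := by
      calc Real.exp (2*(x+y)) ≤ Real.exp 6 := Real.exp_le_exp.mpr (by linarith)
        _ ≤ 729 := exp_six_le
    exact mul_le_mul_of_nonneg_right h6 (le_of_lt (Real.exp_pos _))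
  have hux : (0:ℝ) ≤ 1 + L*x := by nlinarith
  have huy : (0:ℝ) ≤ 1 + L*y := by nlinarith
  have hLuv : 0 ≤ L * ((1+L*x)*(1+L*y)) :=
    mul_nonneg (by linarith) (mul_nonneg hux huy)
  by_cases hxy : x + y ≤ 1
  · rw [if_pos ⟨hx0, hy0, hxy⟩]
    set w : ℝ := 1 - x - y with hwdef
    set r : ℝ := (1-x)*(1-y) with hrdef
    have hw0 : 0 ≤ w := by simp only [hwdef]; linarith
    have hwr : w ≤ r := by simp only [hwdef, hrdef]; nlinarith
    have hrw : r - w = x*y := by simp only [hwdef, hrdef]; ring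
    have hwee : w ≤ ee := by
      have := aux_one_sub_le_exp (x+y); simp only [hwdef]; linarith
    have hwp3 : w ^ (n-3) ≤ ee ^ (n-3) := pow_le_pow_left₀ hw0 hwee _
    have hrp3 : r ^ (n-3) ≤ ee ^ (n-3) := pow_le_pow_left₀ hr0 hree _
    have hrp2 : r ^ (n-2) ≤ ee ^ (n-3) := by
      calc r ^ (n-2) ≤ ee ^ (n-2) := pow_le_pow_left₀ hr0 hree _
        _ ≤ ee ^ (n-3) := pow_le_pow_of_le_one hee0
              (Real.exp_le_one_iff.mpr (by linarith)) (by omega)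
    have hsplit : w ^ (n-2) = w ^ (n-3) * w := by
      rw [← pow_succ]; congr 1; omega
    have hT1a : 0 ≤ w ^ (n-3) - w ^ (n-2) := by
      rw [hsplit]
      nlinarith [pow_nonneg hw0 (n-3), hw0, hwdef]
    have hT1b : w ^ (n-3) - w ^ (n-2) ≤ (x+y) * ee ^ (n-3) := by
      rw [hsplit]
      have h : w ^ (n-3) - w ^ (n-3) * w = w ^ (n-3) * (x + y) := by
        simp only [hwdef]; ring
      rw [h]
      have := mul_le_mul_of_nonneg_right hwp3 (by linarith : (0:ℝ) ≤ x+y)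
      linarith
    have hT2a : 0 ≤ r ^ (n-2) - w ^ (n-2) := by
      have := pow_le_pow_left₀ hw0 hwr (n-2); linarith
    have hT2b : r ^ (n-2) - w ^ (n-2) ≤ (L-2) * (x*y) * ee ^ (n-3) := by
      have key := aux_pow_sub_pow w r hw0 hwr (n-3)
      have hn2 : n - 3 + 1 = n - 2 := by omega
      rw [hn2] at key
      have hcast : ((n-3:ℕ):ℝ) + 1 = L - 2 := by rw [hc3]; ring
      rw [hcast, hrw] at key
      calc r ^ (n-2) - w ^ (n-2) ≤ (L-2) * r ^ (n-3) * (x*y) := key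
        _ ≤ (L-2) * ee ^ (n-3) * (x*y) := by
            apply mul_le_mul_of_nonneg_right _ (mul_nonneg hx0 hy0)
            exact mul_le_mul_of_nonneg_left hrp3 (by linarith)
        _ = (L-2) * (x*y) * ee ^ (n-3) := by ring
    have hprodpow : (1-x)^(n-2) * (1-y)^(n-2) = r^(n-2) := by
      rw [hrdef, ← mul_pow]
    have hEeq : (L-1)*(L-2)*w^(n-3) - (L-1)*(1-x)^(n-2) * ((L-1)*(1-y)^(n-2))
        = (L-1)*((L-2)*(w^(n-3) - w^(n-2)) + (L-2)*(w^(n-2) - r^(n-2)) - r^(n-2)) := by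
      linear_combination (-(L-1)*(L-1)) * hprodpow
    rw [hEeq]
    have hE30 : 0 ≤ ee ^ (n-3) := pow_nonneg hee0 _
    have hR20 : 0 ≤ r ^ (n-2) := pow_nonneg hr0 _
    have hm1 : (L-2)*(w^(n-3) - w^(n-2)) ≤ (L-2)*((x+y)*ee^(n-3)) :=
      mul_le_mul_of_nonneg_left hT1b (by linarith)
    have hm1' : 0 ≤ (L-2)*(w^(n-3) - w^(n-2)) := mul_nonneg (by linarith) hT1a
    have hm2 : (L-2)*(r^(n-2) - w^(n-2)) ≤ (L-2)*((L-2)*(x*y)*ee^(n-3)) :=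
      mul_le_mul_of_nonneg_left hT2b (by linarith)
    have hm2' : 0 ≤ (L-2)*(r^(n-2) - w^(n-2)) := mul_nonneg (by linarith) hT2a
    have hm3' : 0 ≤ (L-2)*((x+y)*ee^(n-3)) := mul_nonneg (by linarith) (mul_nonneg (by linarith) hE30)
    have hm4' : 0 ≤ (L-2)*((L-2)*(x*y)*ee^(n-3)) := mul_nonneg (by linarith) (mul_nonneg (mul_nonneg (by linarith) (mul_nonneg hx0 hy0)) hE30)
    have habs : |(L-1)*((L-2)*(w^(n-3) - w^(n-2)) + (L-2)*(w^(n-2) - r^(n-2)) - r^(n-2))|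
        ≤ (L-1)*((L-2)*((x+y)*ee^(n-3)) + (L-2)*((L-2)*(x*y)*ee^(n-3)) + ee^(n-3)) := by
      rw [abs_mul, abs_of_nonneg (by linarith : (0:ℝ) ≤ L-1)]
      apply mul_le_mul_of_nonneg_left _ (by linarith : (0:ℝ) ≤ L-1)
      rw [abs_le]
      constructor
      · linarith [hrp2]
      · linarith [hrp2]
    have hcoeff : (L-1)*((L-2)*(x+y) + (L-2)*((L-2)*(x*y)) + 1) ≤ L*((1+L*x)*(1+L*y)) := by
      have e1 : (0:ℝ) ≤ (3*L-2)*x := mul_nonneg (by linarith) hx0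
      have e2 : (0:ℝ) ≤ (3*L-2)*y := mul_nonneg (by linarith) hy0
      have e3 : (0:ℝ) ≤ (5*L^2-8*L+4)*(x*y) := by
        apply mul_nonneg _ (mul_nonneg hx0 hy0)
        nlinarith [sq_nonneg (L-1)]
      nlinarith [e1, e2, e3]
    calc |(L-1)*((L-2)*(w^(n-3) - w^(n-2)) + (L-2)*(w^(n-2) - r^(n-2)) - r^(n-2))|
        ≤ (L-1)*((L-2)*((x+y)*ee^(n-3)) + (L-2)*((L-2)*(x*y)*ee^(n-3)) + ee^(n-3)) := habs
      _ = (L-1)*((L-2)*(x+y) + (L-2)*((L-2)*(x*y)) + 1) * ee^(n-3) := by ring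
      _ ≤ (L * ((1+L*x)*(1+L*y))) * ee^(n-3) :=
          mul_le_mul_of_nonneg_right hcoeff hE30
      _ ≤ (L * ((1+L*x)*(1+L*y))) * (729 * Real.exp (-(L*(x+y)))) :=
          mul_le_mul_of_nonneg_left hstep2 hLuv
      _ = 729 * L * ((1+L*x)*(1+L*y)) * Real.exp (-(L*(x+y))) := by ring
  · rw [if_neg (by tauto)]
    have hxy1 : 1 < x + y := lt_of_not_ge hxy
    rw [abs_sub_comm, sub_zero]
    have heq : (L-1)*(1-x)^(n-2) * ((L-1)*(1-y)^(n-2)) = (L-1)*(L-1)*((1-x)*(1-y))^(n-2) := by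
      rw [mul_pow]; ring
    rw [heq]
    have hb : ((1-x)*(1-y))^(n-2) ≤ ee^(n-2) := pow_le_pow_left₀ hr0 hree _
    have hR0 : 0 ≤ ((1-x)*(1-y))^(n-2) := pow_nonneg hr0 _
    rw [abs_of_nonneg (mul_nonneg (mul_nonneg (by linarith) (by linarith)) hR0)]
    have hLL : (L-1)*(L-1) ≤ L * ((1+L*x)*(1+L*y)) := by
      have hxyL : L ≤ L*(x+y) := by nlinarith
      have h1 : L*L ≤ L*(L*(x+y)) := mul_le_mul_of_nonneg_left hxyL (by linarith)
      have h2 : (0:ℝ) ≤ L*(L*(L*(x*y))) :=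
        mul_nonneg (by linarith) (mul_nonneg (by linarith)
          (mul_nonneg (by linarith) (mul_nonneg hx0 hy0)))
      nlinarith [h1, h2]
    calc (L-1)*(L-1)*((1-x)*(1-y))^(n-2)
        ≤ (L-1)*(L-1) * (729 * Real.exp (-(L*(x+y)))) := by
          apply mul_le_mul_of_nonneg_left (le_trans hb hstep2')
          exact mul_nonneg (by linarith) (by linarith)
      _ ≤ (L * ((1+L*x)*(1+L*y))) * (729 * Real.exp (-(L*(x+y)))) := by
          apply mul_le_mul_of_nonneg_right hLL
          positivity
      _ = 729 * L * ((1+L*x)*(1+L*y)) * Real.exp (-(L*(x+y))) := by ring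

noncomputable def dens (n : ℕ) : ℝ × ℝ → ℝ := fun t =>
  if 0 ≤ t.1 ∧ 0 ≤ t.2 ∧ t.1 + t.2 ≤ 1 then
    ((n : ℝ) - 1) * ((n : ℝ) - 2) * (1 - t.1 - t.2) ^ (n - 3)
  else 0

lemma dens_nonneg (n : ℕ) (hn : 3 ≤ n) (t : ℝ × ℝ) : 0 ≤ dens n t := by
  have hL3 : (3:ℝ) ≤ (n:ℝ) := by exact_mod_cast hn
  unfold dens
  split_ifs with h
  · have : (0:ℝ) ≤ 1 - t.1 - t.2 := by obtain ⟨h1, h2, h3⟩ := h; linarith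
    exact mul_nonneg (mul_nonneg (by linarith) (by linarith)) (pow_nonneg this _)
  · exact le_refl 0
lemma dens_measurable (n : ℕ) : Measurable (dens n) := by
  unfold dens
  apply Measurable.ite
  · apply MeasurableSet.inter
    · exact measurableSet_le measurable_const measurable_fst
    · apply MeasurableSet.inter
      · exact measurableSet_le measurable_const measurable_snd
      · exact measurableSet_le (measurable_fst.add measurable_snd) measurable_const
  · fun_prop
  · fun_prop

lemma dens_le (n : ℕ) (hn : 3 ≤ n) (t : ℝ × ℝ) :
    ‖dens n t‖ ≤ (Set.Icc ((0:ℝ),(0:ℝ)) (1,1)).indicator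
      (fun _ => ((n:ℝ)-1)*((n:ℝ)-2)) t := by
  have hL3 : (3:ℝ) ≤ (n:ℝ) := by exact_mod_cast hn
  rw [Real.norm_eq_abs, abs_of_nonneg (dens_nonneg n hn t)]
  unfold dens
  split_ifs with h
  · obtain ⟨h1, h2, h3⟩ := h
    have ht : t ∈ Set.Icc ((0:ℝ),(0:ℝ)) (1,1) := by
      constructor
      · exact ⟨h1, h2⟩
      · constructor
        · dsimp; linarith
        · dsimp; linarith
    rw [Set.indicator_of_mem ht]
    have hp : (1 - t.1 - t.2) ^ (n-3) ≤ 1 :=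
      pow_le_one₀ (by linarith) (by linarith)
    calc ((n:ℝ)-1)*((n:ℝ)-2)*(1 - t.1 - t.2)^(n-3)
        ≤ ((n:ℝ)-1)*((n:ℝ)-2)*1 := by
          apply mul_le_mul_of_nonneg_left hp
          exact mul_nonneg (by linarith) (by linarith)
      _ = ((n:ℝ)-1)*((n:ℝ)-2) := by ring
  · exact Set.indicator_nonneg (fun a _ => by nlinarith) t

lemma dens_integrable (n : ℕ) (hn : 3 ≤ n) : Integrable (dens n) := by
  apply Integrable.mono' (g := (Set.Icc ((0:ℝ),(0:ℝ)) (1,1)).indicator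
      (fun _ => ((n:ℝ)-1)*((n:ℝ)-2)))
  · rw [integrable_indicator_iff measurableSet_Icc]
    exact integrableOn_const isCompact_Icc.measure_lt_top.ne
  · exact (dens_measurable n).aestronglyMeasurable
  · exact Filter.Eventually.of_forall (dens_le n hn)

-- inner marginal
lemma dens_marginal (n : ℕ) (hn : 3 ≤ n) (x : ℝ) (hx0 : 0 ≤ x) (hx1 : x ≤ 1) :
    ∫ y, dens n (x, y) = ((n:ℝ)-1)*(1-x)^(n-2) := by
  have hL3 : (3:ℝ) ≤ (n:ℝ) := by exact_mod_cast hn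
  have hind : (fun y => dens n (x, y)) =
      (Set.Icc 0 (1-x)).indicator (fun y => ((n:ℝ)-1)*((n:ℝ)-2)*(1-x-y)^(n-3)) := by
    funext y
    by_cases h : y ∈ Set.Icc 0 (1-x)
    · rw [Set.indicator_of_mem h]
      rw [Set.mem_Icc] at h
      unfold dens
      exact if_pos ⟨hx0, h.1, by linarith [h.2]⟩
    · rw [Set.indicator_of_notMem h]
      rw [Set.mem_Icc] at h
      unfold dens
      apply if_neg
      intro hc
      exact h ⟨hc.2.1, by linarith [hc.2.2]⟩
  rw [hind, integral_indicator measurableSet_Icc, integral_Icc_eq_integral_Ioc,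
    ← intervalIntegral.integral_of_le (by linarith : (0:ℝ) ≤ 1-x)]
  have hderiv : ∀ z ∈ Set.uIcc (0:ℝ) (1-x),
      HasDerivAt (fun z => -((n:ℝ)-1) * (1-x-z)^(n-2))
        (((n:ℝ)-1)*((n:ℝ)-2)*(1-x-z)^(n-3)) z := by
    intro z _
    have h1 : HasDerivAt (fun z : ℝ => 1-x-z) (-1) z := by
      simpa using (hasDerivAt_id z).const_sub (1-x)
    have h2 := (h1.pow (n-2)).const_mul (-(((n:ℝ)-1)))
    have hc2 : ((n-2:ℕ):ℝ) = (n:ℝ) - 2 := by rw [Nat.cast_sub (by omega)]; norm_num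
    have he : n - 2 - 1 = n - 3 := by omega
    rw [he, hc2] at h2
    refine h2.congr_deriv ?_
    ring
  have hint : IntervalIntegrable (fun z => ((n:ℝ)-1)*((n:ℝ)-2)*(1-x-z)^(n-3))
      volume 0 (1-x) := by
    apply Continuous.intervalIntegrable
    fun_prop
  rw [intervalIntegral.integral_eq_sub_of_hasDerivAt hderiv hint]
  have h0 : (1 - x - (1-x)) = 0 := by ring
  rw [h0]
  rw [zero_pow (by omega : n - 2 ≠ 0)]
  ring_nf

-- q closed form
lemma q_closed (a b : ℝ) (h0 : 0 ≤ a) (hab : a ≤ b) (hb : b < 1) :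
    ∫ y in a..b, (1 + |Real.log (1 - y)|) =
      (2*b + (1-b)*Real.log (1-b)) - (2*a + (1-a)*Real.log (1-a)) := by
  have hcong : ∫ y in a..b, (1 + |Real.log (1 - y)|) = ∫ y in a..b, (1 - Real.log (1 - y)) := by
    apply intervalIntegral.integral_congr
    intro y hy
    rw [Set.uIcc_of_le hab, Set.mem_Icc] at hy
    have h1 : Real.log (1 - y) ≤ 0 := Real.log_nonpos (by linarith) (by linarith)
    dsimp
    rw [abs_of_nonpos h1]
    ring
  rw [hcong]
  have hderiv : ∀ y ∈ Set.uIcc a b,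
      HasDerivAt (fun y => 2*y + (1-y)*Real.log (1-y)) (1 - Real.log (1-y)) y := by
    intro y hy
    rw [Set.uIcc_of_le hab, Set.mem_Icc] at hy
    have hy1 : (0:ℝ) < 1 - y := by linarith
    have h1 : HasDerivAt (fun y : ℝ => 1 - y) (-1) y := by
      simpa using (hasDerivAt_id y).const_sub 1
    have hlog : HasDerivAt (fun y : ℝ => Real.log (1 - y)) (-1/(1-y)) y := by
      have := (Real.hasDerivAt_log (ne_of_gt hy1)).comp y h1
      refine this.congr_deriv ?_
      ring
    have hmul : HasDerivAt (fun y : ℝ => (1-y)*Real.log (1-y))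
        ((-1)*Real.log (1-y) + (1-y)*(-1/(1-y))) y := h1.mul hlog
    have h2 : HasDerivAt (fun y : ℝ => 2*y) 2 y := by
      simpa using (hasDerivAt_id y).const_mul (2:ℝ)
    have := h2.add hmul
    refine this.congr_deriv ?_
    field_simp
    ring
  have hint : IntervalIntegrable (fun y => 1 - Real.log (1-y)) volume a b := by
    apply ContinuousOn.intervalIntegrable
    apply continuousOn_of_forall_continuousAt
    intro y hy
    rw [Set.uIcc_of_le hab, Set.mem_Icc] at hy
    have hy1 : (0:ℝ) < 1 - y := by linarith
    apply ContinuousAt.sub continuousAt_const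
    exact (Real.continuousAt_log (ne_of_gt hy1)).comp
      (continuousAt_const.sub continuousAt_id)
  rw [intervalIntegral.integral_eq_sub_of_hasDerivAt hderiv hint]

-- w closed form
lemma w_closed (L s1 s2 : ℝ) (h12 : s1 ≤ s2) :
    ∫ x in Set.Ioc s1 s2, L*((1+L*x) * Real.exp (-(L*x))) =
      (2+L*s1)*Real.exp (-(L*s1)) - (2+L*s2)*Real.exp (-(L*s2)) := by
  rw [← intervalIntegral.integral_of_le h12]
  have hderiv : ∀ x ∈ Set.uIcc s1 s2,
      HasDerivAt (fun x => -((2+L*x)*Real.exp (-(L*x)))) (L*((1+L*x) * Real.exp (-(L*x)))) x := by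
    intro x _
    have h1 : HasDerivAt (fun x : ℝ => -(L*x)) (-L) x := by
      exact (((hasDerivAt_id x).const_mul L).neg).congr_deriv (by simp)
    have hexp : HasDerivAt (fun x : ℝ => Real.exp (-(L*x))) (Real.exp (-(L*x)) * (-L)) x :=
      h1.exp
    have h2 : HasDerivAt (fun x : ℝ => 2+L*x) L x := by
      simpa using ((hasDerivAt_id x).const_mul L).const_add 2
    have hmul := (h2.mul hexp).neg
    refine hmul.congr_deriv ?_
    ring
  have hint : IntervalIntegrable (fun x => L*((1+L*x) * Real.exp (-(L*x)))) volume s1 s2 := by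
    apply Continuous.intervalIntegrable; fun_prop
  rw [intervalIntegral.integral_eq_sub_of_hasDerivAt hderiv hint]
  ring

-- sqrt-based log bound
lemma log_le_half (x : ℝ) (hx : 1 ≤ x) : Real.log x ≤ x/2 := by
  have hx0 : (0:ℝ) < x := by linarith
  have hs := Real.log_le_sub_one_of_pos (Real.sqrt_pos.mpr hx0)
  have hsq : Real.sqrt x ^ 2 = x := Real.sq_sqrt (le_of_lt hx0)
  have hlogs : Real.log (Real.sqrt x) = Real.log x / 2 := Real.log_sqrt (le_of_lt hx0)
  nlinarith [Real.sqrt_nonneg x, sq_nonneg (Real.sqrt x - 2)]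


lemma event_iff (L : ℝ) (hL : 0 < L) (a b x : ℝ) (ha : a < 1) (hb : b < 1) :
    (a < 1 - Real.exp (-L * x) ∧ 1 - Real.exp (-L * x) ≤ b) ↔
      x ∈ Set.Ioc (-Real.log (1-a)/L) (-Real.log (1-b)/L) := by
  rw [show -L * x = -(L * x) from by ring, Set.mem_Ioc]
  have h1 : a < 1 - Real.exp (-(L*x)) ↔ -Real.log (1-a)/L < x := by
    constructor
    · intro h
      have he : Real.exp (-(L*x)) < 1 - a := by linarith
      have := (Real.lt_log_iff_exp_lt (by linarith : (0:ℝ) < 1-a)).mpr he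
      rw [div_lt_iff₀ hL]
      have hc : x * L = L * x := mul_comm x L
      linarith
    · intro h
      rw [div_lt_iff₀ hL] at h
      have hc : x * L = L * x := mul_comm x L
      have h2 : -(L*x) < Real.log (1-a) := by linarith
      have := (Real.lt_log_iff_exp_lt (by linarith : (0:ℝ) < 1-a)).mp h2
      linarith
  have h2 : 1 - Real.exp (-(L*x)) ≤ b ↔ x ≤ -Real.log (1-b)/L := by
    constructor
    · intro h
      have he : 1 - b ≤ Real.exp (-(L*x)) := by linarith
      have := (Real.log_le_iff_le_exp (by linarith : (0:ℝ) < 1-b)).mpr he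
      rw [le_div_iff₀ hL]
      have hc : x * L = L * x := mul_comm x L
      linarith
    · intro h
      rw [le_div_iff₀ hL] at h
      have hc : x * L = L * x := mul_comm x L
      have h2 : Real.log (1-b) ≤ -(L*x) := by linarith
      have := (Real.log_le_iff_le_exp (by linarith : (0:ℝ) < 1-b)).mp h2
      linarith
  exact and_congr h1 h2

lemma exp_s_id (L a : ℝ) (hL : 0 < L) (ha : a < 1) :
    Real.exp (-(L * (-Real.log (1-a)/L))) = 1 - a := by
  have h : -(L * (-Real.log (1-a)/L)) = Real.log (1-a) := by field_simp
  rw [h, Real.exp_log (by linarith)]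

lemma Ls_id (L a : ℝ) (hL : 0 < L) :
    L * (-Real.log (1-a)/L) = -Real.log (1-a) := by field_simp

lemma s_nonneg (L a : ℝ) (hL : 0 < L) (h0 : 0 ≤ a) (ha : a < 1) :
    0 ≤ -Real.log (1-a)/L := by
  have : Real.log (1-a) ≤ 0 := Real.log_nonpos (by linarith) (by linarith)
  apply div_nonneg (by linarith) (le_of_lt hL)

lemma s_mono (L a b : ℝ) (hL : 0 < L) (hab : a < b) (hb : b < 1) :
    -Real.log (1-a)/L < -Real.log (1-b)/L := by
  have h : Real.log (1-b) < Real.log (1-a) := Real.log_lt_log (by linarith) (by linarith)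
  exact div_lt_div_of_pos_right (by linarith) hL

lemma s_le_one (l : ℕ) (hl : 3 ≤ l) (b : ℝ) (hb0 : 0 ≤ b) (hb : b ≤ 1 - (l:ℝ)^(-(3/2:ℝ))) :
    -Real.log (1-b)/(l:ℝ) ≤ 1 := by
  have hL3 : (3:ℝ) ≤ (l:ℝ) := by exact_mod_cast hl
  have hε : (0:ℝ) < (l:ℝ)^(-(3/2:ℝ)) := Real.rpow_pos_of_pos (by linarith) _
  have h1b : (l:ℝ)^(-(3/2:ℝ)) ≤ 1-b := by linarith
  have hlog : Real.log ((l:ℝ)^(-(3/2:ℝ))) ≤ Real.log (1-b) := Real.log_le_log hε h1b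
  have hrw : Real.log ((l:ℝ)^(-(3/2:ℝ))) = (-(3/2)) * Real.log (l:ℝ) :=
    Real.log_rpow (by linarith) _
  have hll : Real.log (l:ℝ) ≤ (l:ℝ)/2 := log_le_half (l:ℝ) (by linarith)
  have hlogl0 : 0 ≤ Real.log (l:ℝ) := Real.log_nonneg (by linarith)
  rw [div_le_one (by linarith : (0:ℝ) < (l:ℝ))]
  linarith
lemma dens_symm (n : ℕ) (x y : ℝ) : dens n (x, y) = dens n (y, x) := by
  unfold dens
  dsimp only
  apply if_congr
  · constructor <;> rintro ⟨a, b, c⟩ <;> exact ⟨b, a, by linarith⟩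
  · rw [show (1 - x - y) = (1 - y - x) by ring]
  · rfl

lemma dens_marginal' (n : ℕ) (hn : 3 ≤ n) (y : ℝ) (hy0 : 0 ≤ y) (hy1 : y ≤ 1) :
    ∫ x, dens n (x, y) = ((n:ℝ)-1)*(1-y)^(n-2) := by
  have : (fun x => dens n (x, y)) = fun x => dens n (y, x) := by
    funext x; exact dens_symm n x y
  rw [this, dens_marginal n hn y hy0 hy1]

lemma strip_fst (n : ℕ) (hn : 3 ≤ n) (s1 s2 : ℝ) (h0 : 0 ≤ s1) (h12 : s1 ≤ s2) (h21 : s2 ≤ 1) :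
    ∫ t in (Set.Ioc s1 s2) ×ˢ (Set.univ : Set ℝ), dens n t =
      ∫ x in Set.Ioc s1 s2, ((n:ℝ)-1)*(1-x)^(n-2) := by
  have hint : Integrable (dens n) ((volume.restrict (Set.Ioc s1 s2)).prod
      (volume.restrict (Set.univ : Set ℝ))) := by
    rw [Measure.prod_restrict, ← Measure.volume_eq_prod]
    exact (dens_integrable n hn).restrict
  rw [Measure.volume_eq_prod, ← Measure.prod_restrict]
  rw [Measure.restrict_univ] at hint ⊢
  rw [integral_prod _ hint]
  apply setIntegral_congr_fun measurableSet_Ioc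
  intro x hx
  rw [Set.mem_Ioc] at hx
  exact dens_marginal n hn x (by linarith [hx.1]) (le_trans hx.2 h21)

lemma strip_snd (n : ℕ) (hn : 3 ≤ n) (t1 t2 : ℝ) (h0 : 0 ≤ t1) (h12 : t1 ≤ t2) (h21 : t2 ≤ 1) :
    ∫ t in (Set.univ : Set ℝ) ×ˢ (Set.Ioc t1 t2), dens n t =
      ∫ y in Set.Ioc t1 t2, ((n:ℝ)-1)*(1-y)^(n-2) := by
  have hint : Integrable (dens n) ((volume.restrict (Set.univ : Set ℝ)).prod
      (volume.restrict (Set.Ioc t1 t2))) := by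
    rw [Measure.prod_restrict, ← Measure.volume_eq_prod]
    exact (dens_integrable n hn).restrict
  rw [Measure.volume_eq_prod, ← Measure.prod_restrict]
  rw [Measure.restrict_univ] at hint ⊢
  rw [integral_prod_symm _ hint]
  apply setIntegral_congr_fun measurableSet_Ioc
  intro y hy
  rw [Set.mem_Ioc] at hy
  exact dens_marginal' n hn y (by linarith [hy.1]) (le_trans hy.2 h21)

lemma cov_expand {Ω : Type} [MeasurableSpace Ω] (P : Measure Ω) [IsProbabilityMeasure P]
    (ξ₁ ξ₂ : Ω → ℝ) (hm1 : Measurable ξ₁) (hm2 : Measurable ξ₂)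
    (I J : Set ℝ) (hI : MeasurableSet I) (hJ : MeasurableSet J) :
    ∫ ω, (I.indicator (fun _ => (1:ℝ)) (ξ₁ ω) - (P {ω' | ξ₁ ω' ∈ I}).toReal) *
        (J.indicator (fun _ => (1:ℝ)) (ξ₂ ω) - (P {ω' | ξ₂ ω' ∈ J}).toReal) ∂P =
      (P ((fun ω => (ξ₁ ω, ξ₂ ω)) ⁻¹' (I ×ˢ J))).toReal -
        (P {ω' | ξ₁ ω' ∈ I}).toReal * (P {ω' | ξ₂ ω' ∈ J}).toReal := by
  classical
  have hAm : MeasurableSet {ω' | ξ₁ ω' ∈ I} := hm1 hI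
  have hBm : MeasurableSet {ω' | ξ₂ ω' ∈ J} := hm2 hJ
  have hABm : MeasurableSet ({ω' | ξ₁ ω' ∈ I} ∩ {ω' | ξ₂ ω' ∈ J}) := hAm.inter hBm
  have hpre : (fun ω => (ξ₁ ω, ξ₂ ω)) ⁻¹' (I ×ˢ J) = {ω' | ξ₁ ω' ∈ I} ∩ {ω' | ξ₂ ω' ∈ J} := by
    ext ω; simp [Set.mem_prod]
  rw [hpre]
  set a := (P {ω' | ξ₁ ω' ∈ I}).toReal with ha
  set b := (P {ω' | ξ₂ ω' ∈ J}).toReal with hb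
  have hind : ∀ (S : Set Ω), MeasurableSet S →
      Integrable (S.indicator (fun _ => (1:ℝ))) P ∧
      ∫ ω, S.indicator (fun _ => (1:ℝ)) ω ∂P = (P S).toReal := by
    intro S hS
    constructor
    · rw [integrable_indicator_iff hS]
      exact integrableOn_const (measure_lt_top P S).ne
    · rw [integral_indicator_const _ hS]; simp; rfl
  obtain ⟨hiA', hvA'⟩ := hind _ hAm
  obtain ⟨hiB', hvB'⟩ := hind _ hBm
  obtain ⟨hiAB, hvAB⟩ := hind _ hABm
  have heqA : (fun ω => I.indicator (fun _ => (1:ℝ)) (ξ₁ ω))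
      = ({ω' | ξ₁ ω' ∈ I}).indicator (fun _ => (1:ℝ)) := by
    funext ω; simp [Set.indicator_apply, Set.mem_setOf_eq]
  have heqB : (fun ω => J.indicator (fun _ => (1:ℝ)) (ξ₂ ω))
      = ({ω' | ξ₂ ω' ∈ J}).indicator (fun _ => (1:ℝ)) := by
    funext ω; simp [Set.indicator_apply, Set.mem_setOf_eq]
  have hiA : Integrable (fun ω => I.indicator (fun _ => (1:ℝ)) (ξ₁ ω)) P := by
    rw [heqA]; exact hiA'
  have hiB : Integrable (fun ω => J.indicator (fun _ => (1:ℝ)) (ξ₂ ω)) P := by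
    rw [heqB]; exact hiB'
  have hvA : ∫ ω, I.indicator (fun _ => (1:ℝ)) (ξ₁ ω) ∂P = a := by
    rw [ha, ← hvA']; exact congrArg _ heqA
  have hvB : ∫ ω, J.indicator (fun _ => (1:ℝ)) (ξ₂ ω) ∂P = b := by
    rw [hb, ← hvB']; exact congrArg _ heqB
  have hfun : ∀ ω, (I.indicator (fun _ => (1:ℝ)) (ξ₁ ω) - a) *
        (J.indicator (fun _ => (1:ℝ)) (ξ₂ ω) - b)
      = ((({ω' | ξ₁ ω' ∈ I} ∩ {ω' | ξ₂ ω' ∈ J}).indicator (fun _ => (1:ℝ)) ω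
          - b * (I.indicator (fun _ => (1:ℝ)) (ξ₁ ω)))
        - (a * (J.indicator (fun _ => (1:ℝ)) (ξ₂ ω)) - a * b)) := by
    intro ω
    by_cases hxA : ξ₁ ω ∈ I <;> by_cases hxB : ξ₂ ω ∈ J <;>
      simp [Set.indicator_apply, Set.mem_setOf_eq, Set.mem_inter_iff, hxA, hxB] <;> ring
  have hstep := integral_congr_ae (μ := P) (Filter.Eventually.of_forall hfun)
  rw [hstep]
  have h1 := integral_sub (μ := P) (hiAB.sub (hiA.const_mul b))
    ((hiB.const_mul a).sub (integrable_const (a*b)))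
  simp only [Pi.sub_apply] at h1
  rw [h1]
  have h2 := integral_sub (μ := P) hiAB (hiA.const_mul b)
  rw [h2]
  have h3 := integral_sub (μ := P) (hiB.const_mul a) (integrable_const (a*b))
  rw [h3]
  rw [integral_const_mul b, integral_const_mul a, integral_const, hvA, hvB, hvAB, probReal_univ]
  simp only [ENNReal.toReal_one, one_smul]
  ring


theorem stmt16 :
    ∃ C : ℝ, ∀ l : ℕ, 3 ≤ l →
      ∀ (Ω : Type) (_ : MeasurableSpace Ω) (P : Measure Ω),
        IsProbabilityMeasure P →
        ∀ ξ₁ ξ₂ : Ω → ℝ, Measurable ξ₁ → Measurable ξ₂ →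
        -- joint density of (ξ₁, ξ₂): two-dimensional Dirichlet(1,…,1) marginal
        Measure.map (fun ω => (ξ₁ ω, ξ₂ ω)) P =
          (volume : Measure (ℝ × ℝ)).withDensity (fun t =>
            ENNReal.ofReal
              (if 0 ≤ t.1 ∧ 0 ≤ t.2 ∧ t.1 + t.2 ≤ 1 then
                ((l : ℝ) - 1) * ((l : ℝ) - 2) * (1 - t.1 - t.2) ^ (l - 3)
              else 0)) →
        ∀ α₁ α₂ β₁ β₂ : ℝ,
          0 ≤ α₁ → α₁ < α₂ → α₂ ≤ 1 - (l : ℝ) ^ (-(3 / 2 : ℝ)) →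
          0 ≤ β₁ → β₁ < β₂ → β₂ ≤ 1 - (l : ℝ) ^ (-(3 / 2 : ℝ)) →
          |∫ ω,
              ((if α₁ < 1 - Real.exp (-(l : ℝ) * ξ₁ ω) ∧
                    1 - Real.exp (-(l : ℝ) * ξ₁ ω) ≤ α₂ then (1 : ℝ) else 0) -
                (P {ω' | α₁ < 1 - Real.exp (-(l : ℝ) * ξ₁ ω') ∧
                    1 - Real.exp (-(l : ℝ) * ξ₁ ω') ≤ α₂}).toReal) *
              ((if β₁ < 1 - Real.exp (-(l : ℝ) * ξ₂ ω) ∧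
                    1 - Real.exp (-(l : ℝ) * ξ₂ ω) ≤ β₂ then (1 : ℝ) else 0) -
                (P {ω' | β₁ < 1 - Real.exp (-(l : ℝ) * ξ₂ ω') ∧
                    1 - Real.exp (-(l : ℝ) * ξ₂ ω') ≤ β₂}).toReal) ∂P| ≤
            (C / l) * (∫ y in α₁..α₂, (1 + |Real.log (1 - y)|)) *
              (∫ y in β₁..β₂, (1 + |Real.log (1 - y)|)) := by
  classical
  refine ⟨729, ?_⟩
  intro l hl Ω mΩ P hP ξ₁ ξ₂ hm1 hm2 hmap α₁ α₂ β₁ β₂ hα0 hα12 hα2 hβ0 hβ12 hβ2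
  haveI := hP
  have hL3 : (3:ℝ) ≤ (l:ℝ) := by exact_mod_cast hl
  have hL0 : (0:ℝ) < (l:ℝ) := by linarith
  have hεpos : (0:ℝ) < (l:ℝ)^(-(3/2:ℝ)) := Real.rpow_pos_of_pos hL0 _
  have hα21 : α₂ < 1 := by linarith
  have hβ21 : β₂ < 1 := by linarith
  have hα11 : α₁ < 1 := lt_trans hα12 hα21
  have hβ11 : β₁ < 1 := lt_trans hβ12 hβ21
  set s1 : ℝ := -Real.log (1-α₁)/(l:ℝ) with hs1def
  set s2 : ℝ := -Real.log (1-α₂)/(l:ℝ) with hs2def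
  set t1 : ℝ := -Real.log (1-β₁)/(l:ℝ) with ht1def
  set t2 : ℝ := -Real.log (1-β₂)/(l:ℝ) with ht2def
  have hs10 : 0 ≤ s1 := s_nonneg _ _ hL0 hα0 hα11
  have ht10 : 0 ≤ t1 := s_nonneg _ _ hL0 hβ0 hβ11
  have hs12 : s1 < s2 := s_mono _ _ _ hL0 hα12 hα21
  have ht12 : t1 < t2 := s_mono _ _ _ hL0 hβ12 hβ21
  have hs21 : s2 ≤ 1 := s_le_one l hl α₂ (by linarith) hα2
  have ht21 : t2 ≤ 1 := s_le_one l hl β₂ (by linarith) hβ2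
  have hiffα : ∀ x : ℝ, (α₁ < 1 - Real.exp (-(l:ℝ) * x) ∧ 1 - Real.exp (-(l:ℝ) * x) ≤ α₂)
      ↔ x ∈ Set.Ioc s1 s2 := fun x => event_iff (l:ℝ) hL0 α₁ α₂ x hα11 hα21
  have hiffβ : ∀ x : ℝ, (β₁ < 1 - Real.exp (-(l:ℝ) * x) ∧ 1 - Real.exp (-(l:ℝ) * x) ≤ β₂)
      ↔ x ∈ Set.Ioc t1 t2 := fun x => event_iff (l:ℝ) hL0 β₁ β₂ x hβ11 hβ21
  -- rewrite sets
  have hsetα : {ω' | α₁ < 1 - Real.exp (-(l:ℝ) * ξ₁ ω') ∧ 1 - Real.exp (-(l:ℝ) * ξ₁ ω') ≤ α₂}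
      = {ω' | ξ₁ ω' ∈ Set.Ioc s1 s2} := Set.ext fun ω' => hiffα (ξ₁ ω')
  have hsetβ : {ω' | β₁ < 1 - Real.exp (-(l:ℝ) * ξ₂ ω') ∧ 1 - Real.exp (-(l:ℝ) * ξ₂ ω') ≤ β₂}
      = {ω' | ξ₂ ω' ∈ Set.Ioc t1 t2} := Set.ext fun ω' => hiffβ (ξ₂ ω')
  rw [hsetα, hsetβ]
  -- rewrite integrand to indicator form
  have hinteq : ∫ ω,
      ((if α₁ < 1 - Real.exp (-(l:ℝ) * ξ₁ ω) ∧ 1 - Real.exp (-(l:ℝ) * ξ₁ ω) ≤ α₂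
          then (1:ℝ) else 0) - (P {ω' | ξ₁ ω' ∈ Set.Ioc s1 s2}).toReal) *
      ((if β₁ < 1 - Real.exp (-(l:ℝ) * ξ₂ ω) ∧ 1 - Real.exp (-(l:ℝ) * ξ₂ ω) ≤ β₂
          then (1:ℝ) else 0) - (P {ω' | ξ₂ ω' ∈ Set.Ioc t1 t2}).toReal) ∂P =
    ∫ ω, ((Set.Ioc s1 s2).indicator (fun _ => (1:ℝ)) (ξ₁ ω) -
            (P {ω' | ξ₁ ω' ∈ Set.Ioc s1 s2}).toReal) *
          ((Set.Ioc t1 t2).indicator (fun _ => (1:ℝ)) (ξ₂ ω) -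
            (P {ω' | ξ₂ ω' ∈ Set.Ioc t1 t2}).toReal) ∂P := by
    apply integral_congr_ae
    apply Filter.Eventually.of_forall
    intro ω
    dsimp only
    have h1 : (if α₁ < 1 - Real.exp (-(l:ℝ) * ξ₁ ω) ∧ 1 - Real.exp (-(l:ℝ) * ξ₁ ω) ≤ α₂
        then (1:ℝ) else 0) = (Set.Ioc s1 s2).indicator (fun _ => (1:ℝ)) (ξ₁ ω) := by
      rw [Set.indicator_apply]
      exact if_congr (hiffα (ξ₁ ω)) rfl rfl
    have h2 : (if β₁ < 1 - Real.exp (-(l:ℝ) * ξ₂ ω) ∧ 1 - Real.exp (-(l:ℝ) * ξ₂ ω) ≤ β₂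
        then (1:ℝ) else 0) = (Set.Ioc t1 t2).indicator (fun _ => (1:ℝ)) (ξ₂ ω) := by
      rw [Set.indicator_apply]
      exact if_congr (hiffβ (ξ₂ ω)) rfl rfl
    rw [h1, h2]
  rw [hinteq, cov_expand P ξ₁ ξ₂ hm1 hm2 _ _ measurableSet_Ioc measurableSet_Ioc]
  -- express probabilities as integrals of the density
  have key : ∀ S : Set (ℝ×ℝ), MeasurableSet S →
      (P ((fun ω => (ξ₁ ω, ξ₂ ω)) ⁻¹' S)).toReal = ∫ t in S, dens l t := by
    intro S hS
    have h1 : P ((fun ω => (ξ₁ ω, ξ₂ ω)) ⁻¹' S) = ∫⁻ t in S, ENNReal.ofReal (dens l t) ∂volume := by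
      rw [← Measure.map_apply (hm1.prodMk hm2) hS, hmap, withDensity_apply _ hS]
      rfl
    rw [h1]
    rw [integral_eq_lintegral_of_nonneg_ae
      (Filter.Eventually.of_forall fun t => dens_nonneg l hl t)
      ((dens_measurable l).aestronglyMeasurable)]
  have hAkey : (P {ω' | ξ₁ ω' ∈ Set.Ioc s1 s2}).toReal
      = ∫ x in Set.Ioc s1 s2, ((l:ℝ)-1)*(1-x)^(l-2) := by
    have hpre : {ω' | ξ₁ ω' ∈ Set.Ioc s1 s2}
        = (fun ω => (ξ₁ ω, ξ₂ ω)) ⁻¹' ((Set.Ioc s1 s2) ×ˢ (Set.univ : Set ℝ)) := by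
      ext ω; simp [Set.mem_prod]
    rw [hpre, key _ (measurableSet_Ioc.prod MeasurableSet.univ),
      strip_fst l hl s1 s2 hs10 (le_of_lt hs12) hs21]
  have hBkey : (P {ω' | ξ₂ ω' ∈ Set.Ioc t1 t2}).toReal
      = ∫ y in Set.Ioc t1 t2, ((l:ℝ)-1)*(1-y)^(l-2) := by
    have hpre : {ω' | ξ₂ ω' ∈ Set.Ioc t1 t2}
        = (fun ω => (ξ₁ ω, ξ₂ ω)) ⁻¹' ((Set.univ : Set ℝ) ×ˢ (Set.Ioc t1 t2)) := by
      ext ω; simp [Set.mem_prod]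
    rw [hpre, key _ (MeasurableSet.univ.prod measurableSet_Ioc),
      strip_snd l hl t1 t2 ht10 (le_of_lt ht12) ht21]
  rw [key _ (measurableSet_Ioc.prod measurableSet_Ioc), hAkey, hBkey]
  -- integrability facts on the rectangle
  set R : Set (ℝ×ℝ) := (Set.Ioc s1 s2) ×ˢ (Set.Ioc t1 t2) with hRdef
  have hRsub : R ⊆ Set.Icc (s1, t1) (s2, t2) := by
    rw [← Set.Icc_prod_Icc]
    exact Set.prod_mono Set.Ioc_subset_Icc_self Set.Ioc_subset_Icc_self
  have hdint : IntegrableOn (dens l) R volume := (dens_integrable l hl).integrableOn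
  have hg1c : Continuous (fun t : ℝ×ℝ => (((l:ℝ)-1)*(1-t.1)^(l-2)) * (((l:ℝ)-1)*(1-t.2)^(l-2))) := by
    fun_prop
  have hg1int : IntegrableOn (fun t : ℝ×ℝ => (((l:ℝ)-1)*(1-t.1)^(l-2)) * (((l:ℝ)-1)*(1-t.2)^(l-2)))
      R volume := (hg1c.integrableOn_Icc).mono_set hRsub
  have hBc : Continuous (fun t : ℝ×ℝ =>
      729*(l:ℝ)*((1+(l:ℝ)*t.1)*(1+(l:ℝ)*t.2))*Real.exp (-((l:ℝ)*(t.1+t.2)))) := by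
    fun_prop
  have hBint : IntegrableOn (fun t : ℝ×ℝ =>
      729*(l:ℝ)*((1+(l:ℝ)*t.1)*(1+(l:ℝ)*t.2))*Real.exp (-((l:ℝ)*(t.1+t.2)))) R volume :=
    (hBc.integrableOn_Icc).mono_set hRsub
  -- product of integrals as double integral
  have hprod : (∫ x in Set.Ioc s1 s2, ((l:ℝ)-1)*(1-x)^(l-2)) *
      (∫ y in Set.Ioc t1 t2, ((l:ℝ)-1)*(1-y)^(l-2))
      = ∫ t in R, (((l:ℝ)-1)*(1-t.1)^(l-2)) * (((l:ℝ)-1)*(1-t.2)^(l-2)) := by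
    have hpm := integral_prod_mul (μ := volume.restrict (Set.Ioc s1 s2))
      (ν := volume.restrict (Set.Ioc t1 t2))
      (f := fun x => ((l:ℝ)-1)*(1-x)^(l-2)) (g := fun y => ((l:ℝ)-1)*(1-y)^(l-2))
    rw [Measure.prod_restrict, ← Measure.volume_eq_prod] at hpm
    rw [hRdef]
    exact hpm.symm
  have hsplit : (∫ t in R, dens l t) -
      (∫ x in Set.Ioc s1 s2, ((l:ℝ)-1)*(1-x)^(l-2)) *
      (∫ y in Set.Ioc t1 t2, ((l:ℝ)-1)*(1-y)^(l-2))
      = ∫ t in R, (dens l t - (((l:ℝ)-1)*(1-t.1)^(l-2)) * (((l:ℝ)-1)*(1-t.2)^(l-2))) := by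
    rw [hprod, ← integral_sub hdint hg1int]
  rw [hsplit]
  -- bound the integral
  have habs : |∫ t in R, (dens l t - (((l:ℝ)-1)*(1-t.1)^(l-2)) * (((l:ℝ)-1)*(1-t.2)^(l-2)))|
      ≤ ∫ t in R, |dens l t - (((l:ℝ)-1)*(1-t.1)^(l-2)) * (((l:ℝ)-1)*(1-t.2)^(l-2))| := by
    have := norm_integral_le_integral_norm (μ := volume.restrict R)
      (f := fun t : ℝ×ℝ => dens l t - (((l:ℝ)-1)*(1-t.1)^(l-2)) * (((l:ℝ)-1)*(1-t.2)^(l-2)))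
    simpa [Real.norm_eq_abs] using this
  have hmono : ∫ t in R, |dens l t - (((l:ℝ)-1)*(1-t.1)^(l-2)) * (((l:ℝ)-1)*(1-t.2)^(l-2))|
      ≤ ∫ t in R, 729*(l:ℝ)*((1+(l:ℝ)*t.1)*(1+(l:ℝ)*t.2))*Real.exp (-((l:ℝ)*(t.1+t.2))) := by
    apply setIntegral_mono_on ((hdint.sub hg1int).abs) hBint
      (measurableSet_Ioc.prod measurableSet_Ioc)
    intro t ht
    rw [Set.mem_prod, Set.mem_Ioc, Set.mem_Ioc] at ht
    have h := ptbound l hl t.1 t.2 (le_trans hs10 (le_of_lt ht.1.1))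
      (le_trans ht.1.2 hs21) (le_trans ht10 (le_of_lt ht.2.1)) (le_trans ht.2.2 ht21)
    calc |dens l t - (((l:ℝ)-1)*(1-t.1)^(l-2)) * (((l:ℝ)-1)*(1-t.2)^(l-2))|
        = |(if 0 ≤ t.1 ∧ 0 ≤ t.2 ∧ t.1 + t.2 ≤ 1 then
              ((l:ℝ)-1)*((l:ℝ)-2)*(1-t.1-t.2)^(l-3) else 0)
            - ((l:ℝ)-1)*(1-t.1)^(l-2) * (((l:ℝ)-1)*(1-t.2)^(l-2))| := by
          unfold dens; ring_nf
      _ ≤ 729*(l:ℝ)*((1+(l:ℝ)*t.1)*(1+(l:ℝ)*t.2))*Real.exp (-((l:ℝ)*(t.1+t.2))) := h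
  -- compute the bound integral
  have hBval : ∫ t in R, 729*(l:ℝ)*((1+(l:ℝ)*t.1)*(1+(l:ℝ)*t.2))*Real.exp (-((l:ℝ)*(t.1+t.2)))
      = (729/(l:ℝ)) * ((∫ x in Set.Ioc s1 s2, (l:ℝ)*((1+(l:ℝ)*x)*Real.exp (-((l:ℝ)*x)))) *
          (∫ y in Set.Ioc t1 t2, (l:ℝ)*((1+(l:ℝ)*y)*Real.exp (-((l:ℝ)*y))))) := by
    have hfn : ∀ t : ℝ×ℝ, 729*(l:ℝ)*((1+(l:ℝ)*t.1)*(1+(l:ℝ)*t.2))*Real.exp (-((l:ℝ)*(t.1+t.2)))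
        = (729/(l:ℝ)) * (((l:ℝ)*((1+(l:ℝ)*t.1)*Real.exp (-((l:ℝ)*t.1)))) *
            ((l:ℝ)*((1+(l:ℝ)*t.2)*Real.exp (-((l:ℝ)*t.2))))) := by
      intro t
      rw [show -((l:ℝ)*(t.1+t.2)) = -((l:ℝ)*t.1) + -((l:ℝ)*t.2) by ring, Real.exp_add]
      field_simp
    simp only [hfn]
    rw [integral_const_mul]
    have hpm := integral_prod_mul (μ := volume.restrict (Set.Ioc s1 s2))
      (ν := volume.restrict (Set.Ioc t1 t2))
      (f := fun x => (l:ℝ)*((1+(l:ℝ)*x)*Real.exp (-((l:ℝ)*x))))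
      (g := fun y => (l:ℝ)*((1+(l:ℝ)*y)*Real.exp (-((l:ℝ)*y))))
    rw [Measure.prod_restrict, ← Measure.volume_eq_prod] at hpm
    rw [hRdef, hpm]
  -- closed forms of the q-integrals
  have hQα : ∫ y in α₁..α₂, (1 + |Real.log (1-y)|)
      = ∫ x in Set.Ioc s1 s2, (l:ℝ)*((1+(l:ℝ)*x)*Real.exp (-((l:ℝ)*x))) := by
    rw [q_closed α₁ α₂ hα0 (le_of_lt hα12) hα21, w_closed (l:ℝ) s1 s2 (le_of_lt hs12)]
    rw [hs1def, hs2def, exp_s_id (l:ℝ) α₁ hL0 hα11, exp_s_id (l:ℝ) α₂ hL0 hα21,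
      Ls_id (l:ℝ) α₁ hL0, Ls_id (l:ℝ) α₂ hL0]
    ring
  have hQβ : ∫ y in β₁..β₂, (1 + |Real.log (1-y)|)
      = ∫ y in Set.Ioc t1 t2, (l:ℝ)*((1+(l:ℝ)*y)*Real.exp (-((l:ℝ)*y))) := by
    rw [q_closed β₁ β₂ hβ0 (le_of_lt hβ12) hβ21, w_closed (l:ℝ) t1 t2 (le_of_lt ht12)]
    rw [ht1def, ht2def, exp_s_id (l:ℝ) β₁ hL0 hβ11, exp_s_id (l:ℝ) β₂ hL0 hβ21,
      Ls_id (l:ℝ) β₁ hL0, Ls_id (l:ℝ) β₂ hL0]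
    ring
  rw [hQα, hQβ]
  calc |∫ t in R, (dens l t - (((l:ℝ)-1)*(1-t.1)^(l-2)) * (((l:ℝ)-1)*(1-t.2)^(l-2)))|
      ≤ ∫ t in R, |dens l t - (((l:ℝ)-1)*(1-t.1)^(l-2)) * (((l:ℝ)-1)*(1-t.2)^(l-2))| := habs
    _ ≤ ∫ t in R, 729*(l:ℝ)*((1+(l:ℝ)*t.1)*(1+(l:ℝ)*t.2))*Real.exp (-((l:ℝ)*(t.1+t.2))) := hmono
    _ = (729/(l:ℝ)) * ((∫ x in Set.Ioc s1 s2, (l:ℝ)*((1+(l:ℝ)*x)*Real.exp (-((l:ℝ)*x)))) *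
          (∫ y in Set.Ioc t1 t2, (l:ℝ)*((1+(l:ℝ)*y)*Real.exp (-((l:ℝ)*y))))) := hBval
    _ = (729/(l:ℝ)) * (∫ x in Set.Ioc s1 s2, (l:ℝ)*((1+(l:ℝ)*x)*Real.exp (-((l:ℝ)*x)))) *
          (∫ y in Set.Ioc t1 t2, (l:ℝ)*((1+(l:ℝ)*y)*Real.exp (-((l:ℝ)*y)))) := by ring
end

section
/- Let ξ be a random variable with CDF P(ξ ≤ t) = 1 - (1-t)^{l-1} on [0,1] and y = 1 - exp(-l ξ). Then for 0 ≤ α < β ≤ 1 - l^{-3/2} and l ≥ 2, P(α < y ≤ β) ≤ e² (β - α). -/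
open MeasureTheory

private lemma log_bound3 {l : ℝ} (hl : 1 ≤ l) : 3 * Real.log l ≤ 2 * l := by
  have h0 : (0:ℝ) ≤ l := by linarith
  have hs : Real.sqrt l ^ 2 = l := Real.sq_sqrt h0
  have hs0 : 0 ≤ Real.sqrt l := Real.sqrt_nonneg l
  have hspos : 0 < Real.sqrt l := Real.sqrt_pos.mpr (by linarith)
  have h1 : Real.log (Real.sqrt l) ≤ Real.sqrt l - 1 :=
    Real.log_le_sub_one_of_pos hspos
  have h2 : Real.log (Real.sqrt l) = Real.log l / 2 := Real.log_sqrt h0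
  nlinarith [sq_nonneg (Real.sqrt l - 3/2)]

set_option maxHeartbeats 1000000 in
theorem stmt17 (l : ℕ) (hl : 2 ≤ l)
    {Ω : Type*} [MeasurableSpace Ω] (P : Measure Ω) [IsProbabilityMeasure P]
    (ξ : Ω → ℝ) (hmeas : Measurable ξ)
    (hcdf : ∀ t ∈ Set.Icc (0 : ℝ) 1,
      (P {ω | ξ ω ≤ t}).toReal = 1 - (1 - t) ^ (l - 1))
    (α β : ℝ) (hα : 0 ≤ α) (hαβ : α < β) (hβ : β ≤ 1 - (l : ℝ) ^ (-(3 / 2 : ℝ))) :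
    (P {ω | α < 1 - Real.exp (-(l : ℝ) * ξ ω) ∧
        1 - Real.exp (-(l : ℝ) * ξ ω) ≤ β}).toReal ≤
      Real.exp 2 * (β - α) := by
  have hL2 : (2:ℝ) ≤ (l:ℝ) := by exact_mod_cast hl
  set L : ℝ := (l:ℝ) with hLdef
  have hL0 : 0 < L := by linarith
  have hlog3 : 3 * Real.log L ≤ 2 * L := log_bound3 (by linarith)
  set u : ℝ := 1 - α with hu
  set v : ℝ := 1 - β with hv
  have hrpow : 0 < L ^ (-(3/2:ℝ)) := Real.rpow_pos_of_pos hL0 _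
  have hvlb : L ^ (-(3/2:ℝ)) ≤ v := by rw [hv]; linarith
  have hvpos : 0 < v := lt_of_lt_of_le hrpow hvlb
  have hvu : v < u := by rw [hu, hv]; linarith
  have hupos : 0 < u := hvpos.trans hvu
  have hu1 : u ≤ 1 := by rw [hu]; linarith
  have hlogv : -(3/2) * Real.log L ≤ Real.log v := by
    calc -(3/2) * Real.log L = Real.log (L ^ (-(3/2:ℝ))) := (Real.log_rpow hL0 _).symm
    _ ≤ Real.log v := Real.log_le_log hrpow hvlb
  set a : ℝ := -Real.log u / L with ha
  set b : ℝ := -Real.log v / L with hb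
  have hlogu0 : Real.log u ≤ 0 := Real.log_nonpos hupos.le hu1
  have hloguv : Real.log v ≤ Real.log u := Real.log_le_log hvpos hvu.le
  have ha0 : 0 ≤ a := div_nonneg (by linarith) hL0.le
  have hab : a ≤ b := by
    rw [ha, hb]
    gcongr
  have hb0 : 0 ≤ b := ha0.trans hab
  have hb1 : b ≤ 1 := by
    rw [hb, div_le_one hL0]; linarith
  have ha1 : a ≤ 1 := hab.trans hb1
  -- rewrite the event
  have key1 : ∀ x : ℝ, (α < 1 - Real.exp (-L * x)) ↔ a < x := by
    intro x
    constructor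
    · intro h
      have h1 : Real.exp (-L * x) < u := by rw [hu]; linarith
      have h2 : -L * x < Real.log u := (Real.lt_log_iff_exp_lt hupos).mpr h1
      rw [ha, div_lt_iff₀ hL0]
      nlinarith
    · intro h
      rw [ha, div_lt_iff₀ hL0] at h
      have h2 : -L * x < Real.log u := by nlinarith
      have h1 : Real.exp (-L * x) < u := (Real.lt_log_iff_exp_lt hupos).mp h2
      rw [hu] at h1
      linarith
  have key2 : ∀ x : ℝ, (1 - Real.exp (-L * x) ≤ β) ↔ x ≤ b := by
    intro x
    constructor
    · intro h
      have h1 : v ≤ Real.exp (-L * x) := by rw [hv]; linarith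
      have h2 : Real.log v ≤ -L * x := (Real.log_le_iff_le_exp hvpos).mpr h1
      rw [hb, le_div_iff₀ hL0]
      nlinarith
    · intro h
      rw [hb, le_div_iff₀ hL0] at h
      have h2 : Real.log v ≤ -L * x := by nlinarith
      have h1 : v ≤ Real.exp (-L * x) := (Real.log_le_iff_le_exp hvpos).mp h2
      rw [hv] at h1
      linarith
  have hset : {ω | α < 1 - Real.exp (-L * ξ ω) ∧ 1 - Real.exp (-L * ξ ω) ≤ β}
      = {ω | ξ ω ≤ b} \ {ω | ξ ω ≤ a} := by
    ext ω
    simp only [Set.mem_setOf_eq, Set.mem_diff, not_le, key1 (ξ ω), key2 (ξ ω)]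
    tauto
  have hma : MeasurableSet {ω | ξ ω ≤ a} := measurableSet_le hmeas measurable_const
  have hsub : {ω | ξ ω ≤ a} ⊆ {ω | ξ ω ≤ b} := fun ω h => le_trans h hab
  rw [hset, measure_diff hsub hma.nullMeasurableSet (measure_ne_top P _),
    ENNReal.toReal_sub_of_le (measure_mono hsub) (measure_ne_top P _),
    hcdf b ⟨hb0, hb1⟩, hcdf a ⟨ha0, ha1⟩]
  have h1b : 1 - b = 1 + Real.log v / L := by rw [hb]; ring
  have h1a : 1 - a = 1 + Real.log u / L := by rw [ha]; ring
  rw [h1b, h1a]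
  have hba : β - α = u - v := by rw [hu, hv]; ring
  rw [hba]
  suffices h : (1 + Real.log u / L) ^ (l-1) - (1 + Real.log v / L) ^ (l-1)
      ≤ Real.exp 2 * (u - v) by linarith
  -- mean value argument
  set D : ℝ → ℝ := fun t => ((l-1 : ℕ) : ℝ) * (1 + Real.log t / L) ^ (l-1-1) * (t⁻¹ / L)
    with hD
  have htfact : ∀ t ∈ Set.Icc v u, 0 < t ∧ Real.log t ≤ 0 ∧
      -(3/2) * Real.log L ≤ Real.log t := by
    rintro t ⟨h1, h2⟩
    have htpos : 0 < t := lt_of_lt_of_le hvpos h1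
    refine ⟨htpos, Real.log_nonpos htpos.le (h2.trans hu1), ?_⟩
    exact hlogv.trans (Real.log_le_log hvpos h1)
  have hderiv : ∀ t ∈ Set.Icc v u, HasDerivWithinAt
      (fun x => (1 + Real.log x / L) ^ (l-1)) (D t) (Set.Icc v u) t := by
    intro t ht
    obtain ⟨htpos, -, -⟩ := htfact t ht
    exact ((((Real.hasDerivAt_log htpos.ne').div_const L).const_add 1).pow (l-1)).hasDerivWithinAt
  have hbound : ∀ t ∈ Set.Icc v u, ‖D t‖ ≤ Real.exp 2 := by
    intro t ht
    obtain ⟨htpos, hlt0, hltlb⟩ := htfact t ht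
    have hA0 : 0 ≤ 1 + Real.log t / L := by
      have hq : 1 + Real.log t / L = (L + Real.log t) / L := by field_simp
      rw [hq]
      apply div_nonneg _ hL0.le
      linarith
    have hAexp : 1 + Real.log t / L ≤ Real.exp (Real.log t / L) := by
      have := Real.add_one_le_exp (Real.log t / L)
      linarith
    have hcL : ((l-1 : ℕ) : ℝ) ≤ L := by
      rw [hLdef]
      exact_mod_cast Nat.sub_le l 1
    have hn : ((l-1-1 : ℕ):ℝ) = L - 2 := by
      rw [hLdef, show l-1-1 = l-2 from by omega, Nat.cast_sub hl]
      norm_num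
    have hinv : t⁻¹ = Real.exp (-Real.log t) := by
      rw [Real.exp_neg, Real.exp_log htpos]
    have hApow : (1 + Real.log t / L) ^ (l-1-1) ≤ Real.exp (((l-1-1:ℕ):ℝ) * (Real.log t / L)) := by
      rw [Real.exp_nat_mul]
      exact pow_le_pow_left₀ hA0 hAexp _
    have hDval : D t = ((l-1 : ℕ) : ℝ) * (1 + Real.log t / L) ^ (l-1-1) * (Real.exp (-Real.log t) / L) := by
      simp only [hD]
      rw [hinv]
    have hstep : D t ≤ L * Real.exp (((l-1-1:ℕ):ℝ) * (Real.log t / L)) * (Real.exp (-Real.log t) / L) := by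
      rw [hDval]
      apply mul_le_mul_of_nonneg_right _ (by positivity)
      exact mul_le_mul hcL hApow (pow_nonneg hA0 _) hL0.le
    have heq : L * Real.exp (((l-1-1:ℕ):ℝ) * (Real.log t / L)) * (Real.exp (-Real.log t) / L)
        = Real.exp (((l-1-1:ℕ):ℝ) * (Real.log t / L) + -Real.log t) := by
      rw [Real.exp_add]
      field_simp
    have hexpo : ((l-1-1:ℕ):ℝ) * (Real.log t / L) + -Real.log t ≤ 2 := by
      rw [hn]
      have h1 : (L - 2) * (Real.log t / L) + -Real.log t = (-2 * Real.log t) / L := by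
        field_simp; ring
      rw [h1, div_le_iff₀ hL0]
      nlinarith
    have hDle : D t ≤ Real.exp 2 := by
      calc D t ≤ _ := hstep
        _ = _ := heq
        _ ≤ Real.exp 2 := Real.exp_le_exp.mpr hexpo
    have hD0 : 0 ≤ D t := by
      rw [hDval]
      have := Real.exp_pos (-Real.log t)
      positivity
    rw [Real.norm_eq_abs, abs_of_nonneg hD0]
    exact hDle
  have hmvt := Convex.norm_image_sub_le_of_norm_hasDerivWithin_le hderiv hbound
    (convex_Icc v u) (Set.left_mem_Icc.mpr hvu.le) (Set.right_mem_Icc.mpr hvu.le)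
  rw [Real.norm_eq_abs, Real.norm_eq_abs, abs_of_nonneg (by linarith : (0:ℝ) ≤ u - v)] at hmvt
  calc (1 + Real.log u / L) ^ (l-1) - (1 + Real.log v / L) ^ (l-1)
      ≤ |(1 + Real.log u / L) ^ (l-1) - (1 + Real.log v / L) ^ (l-1)| := le_abs_self _
    _ ≤ Real.exp 2 * (u - v) := hmvt
end
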